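/- arXiv:2406.16053 — 5 statements merged into one kernel-verified Lean document; each statement's English description precedes it below -/
import Mathlib

section
/- Let G : ℝ^n → ℝ^m be a set-valued map whose graph is the union of finitely many polyhedral sets G_1,…,G_l. Suppose (i) dom G is convex, and (ii) for each i, the graph of the restriction of G to Q_i is convex, where Q_i is the projection of G_i onto the first coordinate. Then G is Lipschitz continuous on dom G; more precisely, if κ_i is a Lipschitz constant for G on Q_i, then max_i κ_i is a Lipschitz constant for G on dom G. -/
open Set

noncomputable section

variable {m n : ℕ}

/-- Euclidean distance between two vectors. -/
def en {k : ℕ} (x x' : Fin k → ℝ) : ℝ := Real.sqrt (∑ i, (x i - x' i) ^ 2)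

/-- The ℓ₁ norm. -/
def l1 {k : ℕ} (x : Fin k → ℝ) : ℝ := ∑ i, |x i|

/-- Squared Euclidean norm. -/
def sqnorm {k : ℕ} (y : Fin k → ℝ) : ℝ := ∑ i, (y i) ^ 2

/-- `A_iᵀ y`, the dot product of the `i`-th column of `A` with `y`. -/
def colDot (A : Matrix (Fin m) (Fin n) ℝ) (i : Fin n) (y : Fin m → ℝ) : ℝ := ∑ k, A k i * y k

/-- The dual feasible set `Y⁰ = {y : ‖Aᵀy‖_∞ ≤ 1}`. -/
def Ydual (A : Matrix (Fin m) (Fin n) ℝ) : Set (Fin m → ℝ) := {y | ∀ i, |colDot A i y| ≤ 1}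

/-- `F` is a face of `C`: the argmax set of a linear functional over `C`. -/
def IsFaceOf (C F : Set (Fin m → ℝ)) : Prop :=
  ∃ v : Fin m → ℝ, F = {y | y ∈ C ∧ ∀ z ∈ C, ∑ k, v k * z k ≤ ∑ k, v k * y k}

/-- `𝒜⁺(F)`. -/
def Aplus (A : Matrix (Fin m) (Fin n) ℝ) (F : Set (Fin m → ℝ)) : Set (Fin n) :=
  {i | ∀ y ∈ F, colDot A i y = 1}

/-- `𝒜⁻(F)`. -/
def Aminus (A : Matrix (Fin m) (Fin n) ℝ) (F : Set (Fin m → ℝ)) : Set (Fin n) :=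
  {i | ∀ y ∈ F, colDot A i y = -1}

/-- `𝒜⁰(F)`. -/
def Azero (A : Matrix (Fin m) (Fin n) ℝ) (F : Set (Fin m → ℝ)) : Set (Fin n) :=
  {i | ∃ y ∈ F, -1 < colDot A i y ∧ colDot A i y < 1}

/-- Solution set of the extended ℓ₁ regularization problem:
basis pursuit when `lam = 0`, Lasso-type problem when `lam > 0`. -/
def Sol (A : Matrix (Fin m) (Fin n) ℝ) (lam : ℝ) (b : Fin m → ℝ) : Set (Fin n → ℝ) :=
  if lam = 0 then
    {x | A.mulVec x = b ∧ ∀ z, A.mulVec z = b → l1 x ≤ l1 z}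
  else
    {x | ∀ z, l1 x + 1 / (2 * lam) * sqnorm (A.mulVec x - b) ≤
          l1 z + 1 / (2 * lam) * sqnorm (A.mulVec z - b)}

/-- Graph of the solution multifunction `S`. -/
def gphS (A : Matrix (Fin m) (Fin n) ℝ) : Set (ℝ × (Fin m → ℝ) × (Fin n → ℝ)) :=
  {p | 0 ≤ p.1 ∧ p.2.2 ∈ Sol A p.1 p.2.1}

/-- `A_iᵀ(b − Ax)`. -/
def resid (A : Matrix (Fin m) (Fin n) ℝ) (b : Fin m → ℝ) (x : Fin n → ℝ) (i : Fin n) : ℝ :=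
  colDot A i (b - A.mulVec x)

/-- The polyhedral cone `S_F` associated with a face `F` of `Y⁰`. -/
def SFace (A : Matrix (Fin m) (Fin n) ℝ) (F : Set (Fin m → ℝ)) :
    Set (ℝ × (Fin m → ℝ) × (Fin n → ℝ)) :=
  {p | 0 ≤ p.1 ∧
    (∀ i ∈ Aplus A F, 0 ≤ p.2.2 i ∧ resid A p.2.1 p.2.2 i = p.1) ∧
    (∀ i ∈ Azero A F, p.2.2 i = 0 ∧ |resid A p.2.1 p.2.2 i| ≤ p.1) ∧
    (∀ i ∈ Aminus A F, p.2.2 i ≤ 0 ∧ resid A p.2.1 p.2.2 i = -p.1)}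

/-- `cl W(I⁺, I⁰, I⁻)`. -/
def clW (Ip I0 Im : Set (Fin n)) : Set (Fin n → ℝ) :=
  {x | (∀ i ∈ Ip, 0 ≤ x i) ∧ (∀ i ∈ I0, x i = 0) ∧ (∀ i ∈ Im, x i ≤ 0)}

/-- `W(I⁺, I⁰, I⁻)`. -/
def Wset (Ip I0 Im : Set (Fin n)) : Set (Fin n → ℝ) :=
  {x | (∀ i ∈ Ip, 0 < x i) ∧ (∀ i ∈ I0, x i = 0) ∧ (∀ i ∈ Im, x i < 0)}

/-- The projection `D_F` of `S_F` onto the `(λ, b)` coordinates. -/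
def DFace (A : Matrix (Fin m) (Fin n) ℝ) (F : Set (Fin m → ℝ)) : Set (ℝ × (Fin m → ℝ)) :=
  (fun p => (p.1, p.2.1)) '' SFace A F

/-- The convex subdifferential of the ℓ₁ norm. -/
def l1subdiff {k : ℕ} (x : Fin k → ℝ) : Set (Fin k → ℝ) :=
  {v | ∀ z, l1 x + ∑ i, v i * (z i - x i) ≤ l1 z}

/-- Polyhedral subset of `ℝ × ℝ^m × ℝ^n`: a finite intersection of closed half-spaces. -/
def IsPolyhedral3 (s : Set (ℝ × (Fin m → ℝ) × (Fin n → ℝ))) : Prop :=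
  ∃ (k : ℕ) (a : Fin k → ℝ × (Fin m → ℝ) × (Fin n → ℝ)) (β : Fin k → ℝ),
    s = {p | ∀ j, (a j).1 * p.1 + (∑ t, (a j).2.1 t * p.2.1 t) +
          (∑ t, (a j).2.2 t * p.2.2 t) ≤ β j}

/-- Lipschitz continuity of a set-valued map on a set `X`, with constant `κ`. -/
def LipOn {a b : ℕ} (G : (Fin a → ℝ) → Set (Fin b → ℝ)) (X : Set (Fin a → ℝ)) (κ : ℝ) : Prop :=
  (∀ x ∈ X, (G x).Nonempty ∧ IsClosed (G x)) ∧
  ∀ x ∈ X, ∀ x' ∈ X, ∀ y' ∈ G x', ∃ y ∈ G x, en y' y ≤ κ * en x' x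

end

noncomputable section
namespace Aux

open scoped Classical

set_option linter.unusedSectionVars false

lemma en_nonneg {k : ℕ} (x y : Fin k → ℝ) : 0 ≤ en x y := Real.sqrt_nonneg _

lemma en_self {k : ℕ} (x : Fin k → ℝ) : en x x = 0 := by simp [en]

lemma en_comm {k : ℕ} (x y : Fin k → ℝ) : en x y = en y x := by
  unfold en; congr 1; apply Finset.sum_congr rfl; intro i _; ring

lemma en_eq_dist {k : ℕ} (x y : Fin k → ℝ) :
    en x y = dist ((WithLp.equiv 2 (Fin k → ℝ)).symm x) ((WithLp.equiv 2 (Fin k → ℝ)).symm y) := by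
  rw [EuclideanSpace.dist_eq]
  unfold en; congr 1; apply Finset.sum_congr rfl; intro i _
  show (x i - y i) ^ 2 = dist (x i) (y i) ^ 2
  rw [Real.dist_eq, sq_abs]

lemma en_triangle {k : ℕ} (x y z : Fin k → ℝ) : en x z ≤ en x y + en y z := by
  rw [en_eq_dist, en_eq_dist, en_eq_dist]; exact dist_triangle _ _ _

lemma abs_sub_le_en {k : ℕ} (x y : Fin k → ℝ) (i : Fin k) : |x i - y i| ≤ en x y := by
  rw [← Real.sqrt_sq_eq_abs]
  apply Real.sqrt_le_sqrt
  exact Finset.single_le_sum (f := fun i => (x i - y i)^2) (fun j _ => sq_nonneg _)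
    (Finset.mem_univ i)

lemma abs_sum_mul_le {k : ℕ} (v x y : Fin k → ℝ) :
    |∑ i, v i * (x i - y i)| ≤ Real.sqrt (∑ i, (v i)^2) * en x y := by
  have hb : en x y = Real.sqrt (∑ i, (x i - y i)^2) := rfl
  rw [hb, abs_le]
  constructor
  · have := Real.sum_mul_le_sqrt_mul_sqrt Finset.univ (fun i => -v i) (fun i => x i - y i)
    simp only [neg_mul, Finset.sum_neg_distrib, neg_sq] at this
    linarith [this]
  · exact Real.sum_mul_le_sqrt_mul_sqrt Finset.univ v (fun i => x i - y i)

lemma en_line {k : ℕ} (a v : Fin k → ℝ) (t s : ℝ) :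
    en (fun i => a i + t * v i) (fun i => a i + s * v i) = |t - s| * en v 0 := by
  unfold en
  have h1 : ∑ i, (a i + t * v i - (a i + s * v i))^2 = (t-s)^2 * ∑ i, (v i - (0:ℝ))^2 := by
    rw [Finset.mul_sum]; apply Finset.sum_congr rfl; intro i _; ring
  rw [h1, Real.sqrt_mul (sq_nonneg _), Real.sqrt_sq_eq_abs]
  rfl

lemma sqrt_add_sq_le (X Y : ℝ) (hX : 0 ≤ X) : Real.sqrt (X + Y^2) ≤ Real.sqrt X + |Y| := by
  have h : X + Y^2 ≤ (Real.sqrt X + |Y|)^2 := by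
    nlinarith [Real.sq_sqrt hX, Real.sqrt_nonneg X, abs_nonneg Y, sq_abs Y]
  calc Real.sqrt (X + Y^2) ≤ Real.sqrt ((Real.sqrt X + |Y|)^2) := Real.sqrt_le_sqrt h
    _ = Real.sqrt X + |Y| := Real.sqrt_sq (by positivity)


section FMsec
variable {ι : Type} [Fintype ι]

/-- Fourier–Motzkin combination coefficients. -/
noncomputable def fmc1 (d : ι → ℝ) (p : ι × ι) : ℝ :=
  if 0 < d p.1 ∧ d p.2 < 0 then -d p.2 else if d p.1 = 0 ∧ p.2 = p.1 then 1 else 0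

noncomputable def fmc2 (d : ι → ℝ) (p : ι × ι) : ℝ :=
  if 0 < d p.1 ∧ d p.2 < 0 then d p.1 else 0

lemma fmc_pos_case {d : ι → ℝ} {p : ι × ι} (h1 : 0 < d p.1) (h2 : d p.2 < 0) :
    fmc1 d p = -d p.2 ∧ fmc2 d p = d p.1 := by
  unfold fmc1 fmc2; rw [if_pos ⟨h1, h2⟩, if_pos ⟨h1, h2⟩]; exact ⟨rfl, rfl⟩

lemma fmc_zero_case {d : ι → ℝ} {j : ι} (h : d j = 0) :
    fmc1 d (j, j) = 1 ∧ fmc2 d (j, j) = 0 := by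
  have hc : ¬(0 < d (j, j).1 ∧ d (j, j).2 < 0) := by
    rintro ⟨h1, _⟩; rw [h] at h1; exact lt_irrefl _ h1
  constructor
  · unfold fmc1; rw [if_neg hc, if_pos ⟨h, rfl⟩]
  · unfold fmc2; rw [if_neg hc]

lemma fmc1_nonneg (d : ι → ℝ) (p : ι × ι) : 0 ≤ fmc1 d p := by
  unfold fmc1; split_ifs with h1 h2
  · linarith [h1.2]
  · norm_num
  · exact le_refl 0

lemma fmc2_nonneg (d : ι → ℝ) (p : ι × ι) : 0 ≤ fmc2 d p := by
  unfold fmc2; split_ifs with h1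
  · linarith [h1.1]
  · exact le_refl 0

lemma fm_zero (d : ι → ℝ) (p : ι × ι) : fmc1 d p * d p.1 + fmc2 d p * d p.2 = 0 := by
  unfold fmc1 fmc2; split_ifs with h1 h2
  · ring
  · rw [h2.1]; ring
  · ring

lemma fm_forward (d A β : ι → ℝ) (t ε : ℝ) (hε : 0 ≤ ε)
    (h : ∀ j, A j + d j * t ≤ β j + ε) (p : ι × ι) :
    fmc1 d p * A p.1 + fmc2 d p * A p.2 ≤
      (fmc1 d p * β p.1 + fmc2 d p * β p.2) + (fmc1 d p + fmc2 d p) * ε := by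
  have h1 := mul_le_mul_of_nonneg_left (h p.1) (fmc1_nonneg d p)
  have h2 := mul_le_mul_of_nonneg_left (h p.2) (fmc2_nonneg d p)
  have h0' : (fmc1 d p * d p.1 + fmc2 d p * d p.2) * t = 0 := by rw [fm_zero]; ring
  nlinarith [h1, h2, h0']

lemma fm_back (d A β : ι → ℝ)
    (h0 : ∀ p : ι × ι, fmc1 d p * A p.1 + fmc2 d p * A p.2 ≤
      fmc1 d p * β p.1 + fmc2 d p * β p.2) :
    ∃ t, ∀ j, A j + d j * t ≤ β j := by
  classical
  have hz : ∀ j, d j = 0 → A j ≤ β j := by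
    intro j hj
    have h := h0 (j, j)
    rw [(fmc_zero_case hj).1, (fmc_zero_case hj).2] at h
    linarith
  have hpair : ∀ j1 j2, 0 < d j1 → d j2 < 0 →
      (-d j2) * A j1 + d j1 * A j2 ≤ (-d j2) * β j1 + d j1 * β j2 := by
    intro j1 j2 h1 h2
    have h := h0 (j1, j2)
    rw [(fmc_pos_case h1 h2).1, (fmc_pos_case h1 h2).2] at h
    exact h
  have key : ∀ j1 j2, 0 < d j1 → d j2 < 0 →
      (A j2 - β j2) / (-d j2) ≤ (β j1 - A j1) / d j1 := by
    intro j1 j2 h1 h2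
    rw [div_le_div_iff₀ (by linarith) h1]
    nlinarith [hpair j1 j2 h1 h2]
  set U : Finset ι := Finset.univ.filter (fun j => 0 < d j) with hU
  set L : Finset ι := Finset.univ.filter (fun j => d j < 0) with hL
  by_cases hUne : U.Nonempty
  · set V := U.image (fun j => (β j - A j) / d j) with hV
    have hVne : V.Nonempty := hUne.image _
    refine ⟨V.min' hVne, fun j => ?_⟩
    rcases lt_trichotomy (d j) 0 with hdj | hdj | hdj
    · obtain ⟨j1, hj1U, hj1⟩ := Finset.mem_image.1 (V.min'_mem hVne)
      have hj1pos : 0 < d j1 := (Finset.mem_filter.1 hj1U).2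
      have h3 := key j1 j hj1pos hdj
      rw [div_le_iff₀ (by linarith : (0:ℝ) < -d j)] at h3
      rw [hj1] at h3
      nlinarith
    · have := hz j hdj; rw [hdj]; linarith
    · have hle : V.min' hVne ≤ (β j - A j) / d j := by
        apply Finset.min'_le
        exact Finset.mem_image_of_mem _ (Finset.mem_filter.2 ⟨Finset.mem_univ j, hdj⟩)
      have h4 := mul_le_mul_of_nonneg_left hle (le_of_lt hdj)
      rw [mul_div_cancel₀ _ (ne_of_gt hdj)] at h4
      linarith
  · by_cases hLne : L.Nonempty
    · set W := L.image (fun j => (A j - β j) / (-d j)) with hW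
      have hWne : W.Nonempty := hLne.image _
      refine ⟨W.max' hWne, fun j => ?_⟩
      rcases lt_trichotomy (d j) 0 with hdj | hdj | hdj
      · have hle : (A j - β j) / (-d j) ≤ W.max' hWne := by
          apply Finset.le_max'
          exact Finset.mem_image_of_mem _ (Finset.mem_filter.2 ⟨Finset.mem_univ j, hdj⟩)
        have h4 := mul_le_mul_of_nonneg_left hle (by linarith : (0:ℝ) ≤ -d j)
        rw [mul_div_cancel₀ _ (by linarith : -d j ≠ 0)] at h4
        nlinarith
      · have := hz j hdj; rw [hdj]; linarith
      · exact absurd (Finset.mem_filter.2 ⟨Finset.mem_univ j, hdj⟩) (fun h => hUne ⟨j, h⟩)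
    · refine ⟨0, fun j => ?_⟩
      have hdj : d j = 0 := by
        rcases lt_trichotomy (d j) 0 with h | h | h
        · exact absurd (Finset.mem_filter.2 ⟨Finset.mem_univ j, h⟩) (fun hh => hLne ⟨j, hh⟩)
        · exact h
        · exact absurd (Finset.mem_filter.2 ⟨Finset.mem_univ j, h⟩) (fun hh => hUne ⟨j, hh⟩)
      have := hz j hdj; rw [hdj]; linarith

/-- One-dimensional Hoffman bound. -/
lemma hoff1 (d c : ι → ℝ) (s t η : ℝ) (hη : 0 ≤ η)
    (hs : ∀ j, d j * s ≤ c j) (ht : ∀ j, d j * t ≤ c j + η) :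
    ∃ τ, (∀ j, d j * τ ≤ c j) ∧
      |t - τ| ≤ (∑ j, if d j ≠ 0 then 1/|d j| else 0) * η := by
  classical
  have hC1nn : (0:ℝ) ≤ ∑ j, if d j ≠ 0 then 1/|d j| else 0 :=
    Finset.sum_nonneg (fun j _ => by split_ifs <;> positivity)
  by_cases hfeas : ∀ j, d j * t ≤ c j
  · exact ⟨t, hfeas, by simpa using mul_nonneg hC1nn hη⟩
  push_neg at hfeas
  obtain ⟨j0, hj0⟩ := hfeas
  have hdj0 : d j0 ≠ 0 := by
    intro h; rw [h] at hj0; have h2 := hs j0; rw [h] at h2; simp at hj0 h2; linarith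
  have hterm : ∀ j1, d j1 ≠ 0 → 1/|d j1| ≤ ∑ j, if d j ≠ 0 then 1/|d j| else 0 := by
    intro j1 hj1
    refine Finset.single_le_sum (f := fun j => if d j ≠ 0 then 1/|d j| else 0)
      (fun j _ => by split_ifs <;> positivity) (Finset.mem_univ j1) |>.trans_eq' ?_
    rw [if_pos hj1]
  rcases hdj0.lt_or_gt with hneg | hpos
  · set L : Finset ι := Finset.univ.filter (fun j => d j < 0) with hLdef
    have hLne : L.Nonempty := ⟨j0, Finset.mem_filter.2 ⟨Finset.mem_univ _, hneg⟩⟩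
    set W := L.image (fun j => c j / d j) with hWdef
    have hWne : W.Nonempty := hLne.image _
    obtain ⟨j1, hj1L, hj1⟩ := Finset.mem_image.1 (W.max'_mem hWne)
    have hdj1 : d j1 < 0 := (Finset.mem_filter.1 hj1L).2
    have hsτ : W.max' hWne ≤ s := by
      rw [← hj1, div_le_iff_of_neg hdj1]
      nlinarith [hs j1]
    refine ⟨W.max' hWne, fun j => ?_, ?_⟩
    · rcases lt_trichotomy (d j) 0 with hdj | hdj | hdj
      · have hle : c j / d j ≤ W.max' hWne := by
          apply Finset.le_max'
          exact Finset.mem_image_of_mem _ (Finset.mem_filter.2 ⟨Finset.mem_univ j, hdj⟩)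
        rw [div_le_iff_of_neg hdj] at hle
        linarith
      · rw [hdj]; have := hs j; rw [hdj] at this; linarith
      · have h7 := mul_le_mul_of_nonneg_left hsτ (le_of_lt hdj)
        nlinarith [hs j]
    · have htτ : t ≤ W.max' hWne := by
        have h1 : t < c j0 / d j0 := by
          rw [lt_div_iff_of_neg hneg]; nlinarith
        have h2 : c j0 / d j0 ≤ W.max' hWne := by
          apply Finset.le_max'
          exact Finset.mem_image_of_mem _ (Finset.mem_filter.2 ⟨Finset.mem_univ _, hneg⟩)
        linarith
      have hb : W.max' hWne - t ≤ η / (-d j1) := by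
        rw [← hj1, le_div_iff₀ (by linarith : (0:ℝ) < -d j1)]
        have h6 : (c j1 / d j1) * (d j1) = c j1 := div_mul_cancel₀ _ (ne_of_lt hdj1)
        nlinarith [ht j1]
      rw [abs_sub_comm, abs_of_nonneg (by linarith)]
      calc W.max' hWne - t ≤ η / (-d j1) := hb
        _ = (1/|d j1|) * η := by rw [abs_of_neg hdj1]; ring
        _ ≤ _ := mul_le_mul_of_nonneg_right (hterm j1 (ne_of_lt hdj1)) hη
  · set U : Finset ι := Finset.univ.filter (fun j => 0 < d j) with hUdef
    have hUne : U.Nonempty := ⟨j0, Finset.mem_filter.2 ⟨Finset.mem_univ _, hpos⟩⟩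
    set V := U.image (fun j => c j / d j) with hVdef
    have hVne : V.Nonempty := hUne.image _
    obtain ⟨j1, hj1U, hj1⟩ := Finset.mem_image.1 (V.min'_mem hVne)
    have hdj1 : 0 < d j1 := (Finset.mem_filter.1 hj1U).2
    have hsτ : s ≤ V.min' hVne := by
      rw [← hj1, le_div_iff₀ hdj1]
      nlinarith [hs j1]
    refine ⟨V.min' hVne, fun j => ?_, ?_⟩
    · rcases lt_trichotomy (d j) 0 with hdj | hdj | hdj
      · have h7 := mul_le_mul_of_nonpos_left hsτ (le_of_lt hdj)
        nlinarith [hs j]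
      · rw [hdj]; have := hs j; rw [hdj] at this; linarith
      · have hle : V.min' hVne ≤ c j / d j := by
          apply Finset.min'_le
          exact Finset.mem_image_of_mem _ (Finset.mem_filter.2 ⟨Finset.mem_univ j, hdj⟩)
        rw [le_div_iff₀ hdj] at hle
        nlinarith
    · have hτt : V.min' hVne ≤ t := by
        have h1 : c j0 / d j0 < t := by
          rw [div_lt_iff₀ hpos]; nlinarith
        have h2 : V.min' hVne ≤ c j0 / d j0 := by
          apply Finset.min'_le
          exact Finset.mem_image_of_mem _ (Finset.mem_filter.2 ⟨Finset.mem_univ _, hpos⟩)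
        linarith
      have hb : t - V.min' hVne ≤ η / d j1 := by
        rw [← hj1, le_div_iff₀ hdj1]
        have h6 : (c j1 / d j1) * (d j1) = c j1 := div_mul_cancel₀ _ (ne_of_gt hdj1)
        nlinarith [ht j1]
      rw [abs_of_nonneg (by linarith)]
      calc t - V.min' hVne ≤ η / d j1 := hb
        _ = (1/|d j1|) * η := by rw [abs_of_pos hdj1]; ring
        _ ≤ _ := mul_le_mul_of_nonneg_right (hterm j1 (ne_of_gt hdj1)) hη


/-- Bound on the sum of the FM coefficients. -/
lemma fmc_sum_le (d : ι → ℝ) (p : ι × ι) : fmc1 d p + fmc2 d p ≤ 1 + ∑ j, |d j| := by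
  have habs : (0:ℝ) ≤ ∑ j, |d j| := Finset.sum_nonneg (fun j _ => abs_nonneg _)
  unfold fmc1 fmc2
  split_ifs with h1 h2
  · have hne : p.1 ≠ p.2 := by
      intro h; rw [h] at h1; exact absurd h1.1 (not_lt.2 (le_of_lt h1.2))
    have hpair : |d p.1| + |d p.2| ≤ ∑ j, |d j| := by
      have := Finset.sum_le_sum_of_subset_of_nonneg
        (Finset.subset_univ ({p.1, p.2} : Finset ι)) (fun j _ _ => abs_nonneg (d j))
      rwa [Finset.sum_pair hne] at this
    rw [abs_of_pos h1.1, abs_of_neg h1.2] at hpair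
    linarith
  · linarith
  · linarith

end FMsec

/-- Hoffman's error bound, by induction on the dimension. -/
lemma hoff : ∀ (m : ℕ) (ι : Type) [Fintype ι] (V : ι → Fin m → ℝ), ∃ C, 0 ≤ C ∧
    ∀ (w : ι → ℝ) (y : Fin m → ℝ) (ε : ℝ), 0 ≤ ε →
      (∃ z0 : Fin m → ℝ, ∀ j, ∑ i, V j i * z0 i ≤ w j) → (∀ j, ∑ i, V j i * y i ≤ w j + ε) →
      ∃ z : Fin m → ℝ, (∀ j, ∑ i, V j i * z i ≤ w j) ∧ en y z ≤ C * ε := by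
  intro m
  induction m with
  | zero =>
    intro ι _ V
    refine ⟨0, le_refl 0, fun w y ε hε h0 hy => ⟨y, fun j => ?_, ?_⟩⟩
    · obtain ⟨z0, hz0⟩ := h0
      simpa using hz0 j
    · simp [en]
  | succ m IH =>
    intro ι _ V
    set d : ι → ℝ := fun j => V j (Fin.last m) with hd
    set u2 : ι × ι → Fin m → ℝ :=
      fun p i => fmc1 d p * V p.1 i.castSucc + fmc2 d p * V p.2 i.castSucc with hu2
    obtain ⟨Cm, hCmnn, hCm⟩ := IH (ι × ι) u2
    set M : ℝ := 1 + ∑ j, |d j| with hM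
    have hMnn : 0 ≤ M := by
      rw [hM]; have := Finset.sum_nonneg (fun j (_ : j ∈ Finset.univ) => abs_nonneg (d j)); linarith
    set R : ℝ := 1 + ∑ j, Real.sqrt (∑ i : Fin m, (V j i.castSucc)^2) with hR
    have hRnn : 0 ≤ R := by
      rw [hR]
      have := Finset.sum_nonneg (fun j (_ : j ∈ Finset.univ) =>
        Real.sqrt_nonneg (∑ i : Fin m, (V j i.castSucc)^2))
      linarith
    have hRb : ∀ j, Real.sqrt (∑ i : Fin m, (V j i.castSucc)^2) ≤ R := by
      intro j
      rw [hR]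
      have := Finset.single_le_sum (f := fun j => Real.sqrt (∑ i : Fin m, (V j i.castSucc)^2))
        (fun j _ => Real.sqrt_nonneg _) (Finset.mem_univ j)
      linarith
    set C1 : ℝ := ∑ j, if d j ≠ 0 then 1/|d j| else 0 with hC1
    have hC1nn : 0 ≤ C1 :=
      Finset.sum_nonneg (fun j _ => by split_ifs <;> positivity)
    refine ⟨Cm * M + C1 * (1 + R * (Cm * M)), by positivity, ?_⟩
    intro w y ε hε ⟨z0, hz0⟩ hy
    -- pointwise expansion of u2-sums
    have hexp : ∀ (x : Fin m → ℝ) (p : ι × ι), ∑ i, u2 p i * x i =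
        fmc1 d p * (∑ i : Fin m, V p.1 i.castSucc * x i) +
        fmc2 d p * (∑ i : Fin m, V p.2 i.castSucc * x i) := by
      intro x p
      rw [Finset.mul_sum, Finset.mul_sum, ← Finset.sum_add_distrib]
      apply Finset.sum_congr rfl
      intro i _; rw [hu2]; ring
    have hsplit : ∀ (j : ι) (x : Fin (m+1) → ℝ),
        ∑ i, V j i * x i = (∑ i : Fin m, V j i.castSucc * x i.castSucc) + d j * x (Fin.last m) :=
      fun j x => Fin.sum_univ_castSucc (f := fun i => V j i * x i)
    set y' : Fin m → ℝ := fun i => y i.castSucc with hy'def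
    set A : ι → ℝ := fun j => ∑ i : Fin m, V j i.castSucc * y' i with hA
    have hyA : ∀ j, A j + d j * y (Fin.last m) ≤ w j + ε := by
      intro j; have := hy j; rwa [hsplit j y] at this
    set w2 : ι × ι → ℝ := fun p => fmc1 d p * w p.1 + fmc2 d p * w p.2 with hw2
    -- y' is (M ε)-feasible for the FM system
    have hyfm : ∀ p, ∑ i, u2 p i * y' i ≤ w2 p + M * ε := by
      intro p
      have h1 := fm_forward d A w (y (Fin.last m)) ε hε hyA p
      have h2 : (fmc1 d p + fmc2 d p) * ε ≤ M * ε :=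
        mul_le_mul_of_nonneg_right (fmc_sum_le d p) hε
      rw [hexp y' p]
      calc fmc1 d p * A p.1 + fmc2 d p * A p.2
          ≤ (fmc1 d p * w p.1 + fmc2 d p * w p.2) + (fmc1 d p + fmc2 d p) * ε := h1
        _ ≤ w2 p + M * ε := by simp only [hw2]; linarith
    -- the FM system is feasible
    have hfm0 : ∃ z0' : Fin m → ℝ, ∀ p, ∑ i, u2 p i * z0' i ≤ w2 p := by
      refine ⟨fun i => z0 i.castSucc, fun p => ?_⟩
      have hz0A : ∀ j, (∑ i : Fin m, V j i.castSucc * z0 i.castSucc) + d j * z0 (Fin.last m)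
          ≤ w j + 0 := by
        intro j; have := hz0 j; rw [hsplit j z0] at this; linarith
      have := fm_forward d (fun j => ∑ i : Fin m, V j i.castSucc * z0 i.castSucc) w
        (z0 (Fin.last m)) 0 (le_refl 0) hz0A p
      rw [hexp (fun i => z0 i.castSucc) p]
      simpa using this
    -- apply the inductive hypothesis
    obtain ⟨u, hufeas, huclose⟩ := hCm w2 y' (M * ε) (mul_nonneg hMnn hε) hfm0 hyfm
    -- recover a feasible point over u via fm_back
    have hback : ∃ s, ∀ j, (∑ i : Fin m, V j i.castSucc * u i) + d j * s ≤ w j := by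
      apply fm_back d (fun j => ∑ i : Fin m, V j i.castSucc * u i) w
      intro p
      have := hufeas p
      rwa [hexp u p, hw2] at this
    obtain ⟨s, hs⟩ := hback
    set c : ι → ℝ := fun j => w j - ∑ i : Fin m, V j i.castSucc * u i with hc
    have hs' : ∀ j, d j * s ≤ c j := fun j => by have := hs j; rw [hc]; dsimp only; linarith
    set η : ℝ := (1 + R * (Cm * M)) * ε with hη
    have hηnn : 0 ≤ η := by positivity
    have ht' : ∀ j, d j * y (Fin.last m) ≤ c j + η := by
      intro j
      have h1 := hyA j
      have h2 : |∑ i : Fin m, V j i.castSucc * (u i - y' i)| ≤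
          Real.sqrt (∑ i : Fin m, (V j i.castSucc)^2) * en u y' :=
        abs_sum_mul_le (fun i => V j i.castSucc) u y'
      have h3 : en u y' ≤ Cm * (M * ε) := by rw [en_comm]; exact huclose
      have h4 : (∑ i : Fin m, V j i.castSucc * u i) - A j ≤
          R * (Cm * (M * ε)) := by
        have h5 : ∑ i : Fin m, V j i.castSucc * (u i - y' i) =
            (∑ i : Fin m, V j i.castSucc * u i) - A j := by
          rw [hA]; dsimp only; rw [← Finset.sum_sub_distrib]
          apply Finset.sum_congr rfl; intro i _; ring
        have h6 := (abs_le.1 h2).2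
        rw [h5] at h6
        have h7 : Real.sqrt (∑ i : Fin m, (V j i.castSucc)^2) * en u y' ≤
            R * (Cm * (M * ε)) := by
          apply mul_le_mul (hRb j) h3 (by rw [en_comm]; exact Real.sqrt_nonneg _) hRnn
        linarith
      rw [hc]; dsimp only
      rw [hη]
      have hring : (1 + R * (Cm * M)) * ε = ε + R * (Cm * (M * ε)) := by ring
      linarith [h4, h1]
    obtain ⟨τ, hτfeas, hτclose⟩ := hoff1 d c s (y (Fin.last m)) η hηnn hs' ht'
    refine ⟨Fin.snoc u τ, fun j => ?_, ?_⟩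
    · rw [hsplit j (Fin.snoc u τ)]
      have he1 : ∀ i : Fin m, (Fin.snoc u τ : Fin (m+1) → ℝ) i.castSucc = u i :=
        fun i => Fin.snoc_castSucc ..
      have he2 : (Fin.snoc u τ : Fin (m+1) → ℝ) (Fin.last m) = τ := Fin.snoc_last ..
      rw [he2]
      have : ∑ i : Fin m, V j i.castSucc * (Fin.snoc u τ : Fin (m+1) → ℝ) i.castSucc =
          ∑ i : Fin m, V j i.castSucc * u i :=
        Finset.sum_congr rfl (fun i _ => by rw [he1 i])
      rw [this]
      have := hτfeas j
      rw [hc] at this; dsimp only at this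
      linarith
    · have hdist : en y (Fin.snoc u τ) =
          Real.sqrt ((∑ i : Fin m, (y' i - u i)^2) + (y (Fin.last m) - τ)^2) := by
        unfold en
        rw [Fin.sum_univ_castSucc (f := fun i => (y i - (Fin.snoc u τ : Fin (m+1) → ℝ) i)^2)]
        congr 1
        · congr 1
          · apply Finset.sum_congr rfl; intro i _
            rw [Fin.snoc_castSucc]
          · rw [Fin.snoc_last]
      have hb := sqrt_add_sq_le (∑ i : Fin m, (y' i - u i)^2) (y (Fin.last m) - τ)
        (Finset.sum_nonneg (fun i _ => sq_nonneg _))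
      rw [hdist]
      have heq : Real.sqrt (∑ i : Fin m, (y' i - u i)^2) = en y' u := rfl
      rw [heq] at hb
      calc Real.sqrt ((∑ i : Fin m, (y' i - u i)^2) + (y (Fin.last m) - τ)^2)
          ≤ en y' u + |y (Fin.last m) - τ| := hb
        _ ≤ Cm * (M * ε) + C1 * η := by
            apply add_le_add huclose
            rw [hC1] at *; exact hτclose
        _ = (Cm * M + C1 * (1 + R * (Cm * M))) * ε := by rw [hη]; ring


/-- A polyhedral set in `ℝ^n`, with an arbitrary finite index type. -/
def IsPoly {n : ℕ} (s : Set (Fin n → ℝ)) : Prop :=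
  ∃ (ι : Type) (_ : Fintype ι) (a : ι → Fin n → ℝ) (γ : ι → ℝ),
    s = {x | ∀ j, ∑ i, a j i * x i ≤ γ j}

/-- A polyhedral set in `ℝ^n × ℝ^m`. -/
def IsPoly2 {n m : ℕ} (s : Set ((Fin n → ℝ) × (Fin m → ℝ))) : Prop :=
  ∃ (ι : Type) (_ : Fintype ι) (u : ι → Fin n → ℝ) (v : ι → Fin m → ℝ) (γ : ι → ℝ),
    s = {p | ∀ j, (∑ i, u j i * p.1 i) + (∑ i, v j i * p.2 i) ≤ γ j}

lemma IsPoly.isClosed {n : ℕ} {s : Set (Fin n → ℝ)} (h : IsPoly s) : IsClosed s := by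
  obtain ⟨ι, hι, a, γ, rfl⟩ := h
  have : {x : Fin n → ℝ | ∀ j, ∑ i, a j i * x i ≤ γ j} = ⋂ j, {x | ∑ i, a j i * x i ≤ γ j} := by
    ext x; simp
  rw [this]
  exact isClosed_iInter fun j => isClosed_le
    (continuous_finset_sum _ fun i _ => continuous_const.mul (continuous_apply i)) continuous_const

lemma IsPoly.convex {n : ℕ} {s : Set (Fin n → ℝ)} (h : IsPoly s) : Convex ℝ s := by
  obtain ⟨ι, hι, a, γ, rfl⟩ := h
  intro x hx y hy α β hα hβ hαβ
  intro j
  have hcomb : ∑ i, a j i * (α • x + β • y) i = α * (∑ i, a j i * x i) + β * (∑ i, a j i * y i) := by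
    rw [Finset.mul_sum, Finset.mul_sum, ← Finset.sum_add_distrib]
    apply Finset.sum_congr rfl
    intro i _
    simp only [Pi.add_apply, Pi.smul_apply, smul_eq_mul]
    ring
  rw [hcomb]
  have h1 := mul_le_mul_of_nonneg_left (hx j) hα
  have h2 := mul_le_mul_of_nonneg_left (hy j) hβ
  have h3 : α * γ j + β * γ j = γ j := by rw [← add_mul, hαβ, one_mul]
  linarith

lemma IsPoly2.isClosed {n m : ℕ} {s : Set ((Fin n → ℝ) × (Fin m → ℝ))} (h : IsPoly2 s) :
    IsClosed s := by
  obtain ⟨ι, hι, u, v, γ, rfl⟩ := h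
  have : {p : (Fin n → ℝ) × (Fin m → ℝ) | ∀ j, (∑ i, u j i * p.1 i) + (∑ i, v j i * p.2 i) ≤ γ j}
      = ⋂ j, {p | (∑ i, u j i * p.1 i) + (∑ i, v j i * p.2 i) ≤ γ j} := by ext p; simp
  rw [this]
  refine isClosed_iInter fun j => isClosed_le (Continuous.add ?_ ?_) continuous_const
  · exact continuous_finset_sum _ fun i _ =>
      continuous_const.mul ((continuous_apply i).comp continuous_fst)
  · exact continuous_finset_sum _ fun i _ =>
      continuous_const.mul ((continuous_apply i).comp continuous_snd)

lemma IsPoly2.convex {n m : ℕ} {s : Set ((Fin n → ℝ) × (Fin m → ℝ))} (h : IsPoly2 s) :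
    Convex ℝ s := by
  obtain ⟨ι, hι, u, v, γ, rfl⟩ := h
  intro p hp q hq α β hα hβ hαβ
  intro j
  have e1 : ∑ i, u j i * (α • p + β • q).1 i =
      α * (∑ i, u j i * p.1 i) + β * (∑ i, u j i * q.1 i) := by
    rw [Finset.mul_sum, Finset.mul_sum, ← Finset.sum_add_distrib]
    apply Finset.sum_congr rfl
    intro i _
    simp only [Prod.fst_add, Prod.smul_fst, Pi.add_apply, Pi.smul_apply, smul_eq_mul]
    ring
  have e2 : ∑ i, v j i * (α • p + β • q).2 i =
      α * (∑ i, v j i * p.2 i) + β * (∑ i, v j i * q.2 i) := by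
    rw [Finset.mul_sum, Finset.mul_sum, ← Finset.sum_add_distrib]
    apply Finset.sum_congr rfl
    intro i _
    simp only [Prod.snd_add, Prod.smul_snd, Pi.add_apply, Pi.smul_apply, smul_eq_mul]
    ring
  show (∑ i, u j i * (α • p + β • q).1 i) + (∑ i, v j i * (α • p + β • q).2 i) ≤ γ j
  rw [e1, e2]
  have h1 := mul_le_mul_of_nonneg_left (hp j) hα
  have h2 := mul_le_mul_of_nonneg_left (hq j) hβ
  have h3 : α * γ j + β * γ j = γ j := by rw [← add_mul, hαβ, one_mul]
  linarith

/-- Intersection of a polyhedral set in the product with a cylinder over a polyhedral set. -/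
lemma IsPoly2.interCyl {n m : ℕ} {s : Set ((Fin n → ℝ) × (Fin m → ℝ))} {Q : Set (Fin n → ℝ)}
    (hs : IsPoly2 s) (hQ : IsPoly Q) : IsPoly2 {p | p ∈ s ∧ p.1 ∈ Q} := by
  obtain ⟨ι, hι, u, v, γ, rfl⟩ := hs
  obtain ⟨κ, hκ, a, δ, rfl⟩ := hQ
  classical
  refine ⟨ι ⊕ κ, inferInstance, Sum.elim u a, Sum.elim v 0, Sum.elim γ δ, ?_⟩
  ext p
  constructor
  · rintro ⟨h1, h2⟩ j
    cases j with
    | inl j => simpa using h1 j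
    | inr j => simpa using h2 j
  · intro h
    constructor
    · intro j; simpa using h (Sum.inl j)
    · intro j; simpa using h (Sum.inr j)

/-- Core projection lemma via Fourier–Motzkin elimination. -/
lemma projPolyAux : ∀ (m n : ℕ) (ι : Type) (_ : Fintype ι) (u : ι → Fin n → ℝ)
    (v : ι → Fin m → ℝ) (γ : ι → ℝ),
    IsPoly {x : Fin n → ℝ | ∃ y : Fin m → ℝ, ∀ j, (∑ i, u j i * x i) + (∑ i, v j i * y i) ≤ γ j} := by
  intro m
  induction m with
  | zero =>
    intro n ι hι u v γ
    refine ⟨ι, hι, u, γ, ?_⟩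
    ext x
    simp only [Set.mem_setOf_eq]
    constructor
    · rintro ⟨y, hy⟩ j; simpa using hy j
    · intro h; exact ⟨fun i => i.elim0, fun j => by simpa using h j⟩
  | succ m IH =>
    intro n ι hι u v γ
    set d : ι → ℝ := fun j => v j (Fin.last m) with hd
    set u2 : ι × ι → Fin n → ℝ :=
      fun p i => fmc1 d p * u p.1 i + fmc2 d p * u p.2 i with hu2
    set v2 : ι × ι → Fin m → ℝ :=
      fun p i => fmc1 d p * v p.1 i.castSucc + fmc2 d p * v p.2 i.castSucc with hv2
    set γ2 : ι × ι → ℝ := fun p => fmc1 d p * γ p.1 + fmc2 d p * γ p.2 with hγ2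
    have hexp : ∀ (p : ι × ι) (x : Fin n → ℝ) (y' : Fin m → ℝ),
        (∑ i, u2 p i * x i) + (∑ i, v2 p i * y' i) =
        fmc1 d p * ((∑ i, u p.1 i * x i) + (∑ i : Fin m, v p.1 i.castSucc * y' i)) +
        fmc2 d p * ((∑ i, u p.2 i * x i) + (∑ i : Fin m, v p.2 i.castSucc * y' i)) := by
      intro p x y'
      have e1 : ∑ i, u2 p i * x i =
          fmc1 d p * (∑ i, u p.1 i * x i) + fmc2 d p * (∑ i, u p.2 i * x i) := by
        rw [Finset.mul_sum, Finset.mul_sum, ← Finset.sum_add_distrib]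
        exact Finset.sum_congr rfl fun i _ => by rw [hu2]; ring
      have e2 : ∑ i, v2 p i * y' i =
          fmc1 d p * (∑ i : Fin m, v p.1 i.castSucc * y' i) +
          fmc2 d p * (∑ i : Fin m, v p.2 i.castSucc * y' i) := by
        rw [Finset.mul_sum, Finset.mul_sum, ← Finset.sum_add_distrib]
        exact Finset.sum_congr rfl fun i _ => by rw [hv2]; ring
      rw [e1, e2]; ring
    have hsplit : ∀ (j : ι) (y : Fin (m+1) → ℝ),
        ∑ i, v j i * y i = (∑ i : Fin m, v j i.castSucc * y i.castSucc) + d j * y (Fin.last m) :=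
      fun j y => Fin.sum_univ_castSucc (f := fun i => v j i * y i)
    have hkey : {x : Fin n → ℝ | ∃ y : Fin (m+1) → ℝ,
          ∀ j, (∑ i, u j i * x i) + (∑ i, v j i * y i) ≤ γ j} =
        {x : Fin n → ℝ | ∃ y' : Fin m → ℝ,
          ∀ p : ι × ι, (∑ i, u2 p i * x i) + (∑ i, v2 p i * y' i) ≤ γ2 p} := by
      ext x
      simp only [Set.mem_setOf_eq]
      constructor
      · rintro ⟨y, hy⟩
        refine ⟨fun i => y i.castSucc, fun p => ?_⟩
        have hA : ∀ j, ((∑ i, u j i * x i) + (∑ i : Fin m, v j i.castSucc * y i.castSucc))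
            + d j * y (Fin.last m) ≤ γ j + 0 := by
          intro j
          have := hy j
          rw [hsplit j y] at this
          linarith
        have := fm_forward d
          (fun j => (∑ i, u j i * x i) + (∑ i : Fin m, v j i.castSucc * y i.castSucc))
          γ (y (Fin.last m)) 0 (le_refl 0) hA p
        rw [hexp p x (fun i => y i.castSucc), hγ2]
        simpa using this
      · rintro ⟨y', hy'⟩
        have h0 : ∀ p : ι × ι,
            fmc1 d p * ((∑ i, u p.1 i * x i) + (∑ i : Fin m, v p.1 i.castSucc * y' i)) +
            fmc2 d p * ((∑ i, u p.2 i * x i) + (∑ i : Fin m, v p.2 i.castSucc * y' i)) ≤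
            fmc1 d p * γ p.1 + fmc2 d p * γ p.2 := by
          intro p
          have := hy' p
          rw [hexp p x y', hγ2] at this
          exact this
        obtain ⟨t, ht⟩ := fm_back d
          (fun j => (∑ i, u j i * x i) + (∑ i : Fin m, v j i.castSucc * y' i)) γ h0
        refine ⟨Fin.snoc y' t, fun j => ?_⟩
        rw [hsplit j (Fin.snoc y' t)]
        have he2 : (Fin.snoc y' t : Fin (m+1) → ℝ) (Fin.last m) = t := Fin.snoc_last ..
        have he1 : ∑ i : Fin m, v j i.castSucc * (Fin.snoc y' t : Fin (m+1) → ℝ) i.castSucc =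
            ∑ i : Fin m, v j i.castSucc * y' i :=
          Finset.sum_congr rfl fun i _ => by rw [Fin.snoc_castSucc]
        rw [he2, he1]
        have := ht j
        linarith
    rw [hkey]
    exact IH n (ι × ι) inferInstance u2 v2 γ2

/-- The projection of a polyhedral set is polyhedral. -/
lemma IsPoly2.projFst {n m : ℕ} {s : Set ((Fin n → ℝ) × (Fin m → ℝ))} (h : IsPoly2 s) :
    IsPoly (Prod.fst '' s) := by
  obtain ⟨ι, hι, u, v, γ, rfl⟩ := h
  have : Prod.fst '' {p : (Fin n → ℝ) × (Fin m → ℝ) |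
      ∀ j, (∑ i, u j i * p.1 i) + (∑ i, v j i * p.2 i) ≤ γ j} =
      {x : Fin n → ℝ | ∃ y : Fin m → ℝ, ∀ j, (∑ i, u j i * x i) + (∑ i, v j i * y i) ≤ γ j} := by
    ext x
    constructor
    · rintro ⟨⟨x', y⟩, hp, rfl⟩; exact ⟨y, hp⟩
    · rintro ⟨y, hy⟩; exact ⟨(x, y), hy, rfl⟩
  rw [this]
  exact projPolyAux m n ι hι u v γ

/-- Hoffman-type Lipschitz transfer between fibers of a polyhedral set. -/
lemma hoffPoly {n m : ℕ} {s : Set ((Fin n → ℝ) × (Fin m → ℝ))} (hs : IsPoly2 s) :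
    ∃ C, 0 ≤ C ∧ ∀ x1 y1, (x1, y1) ∈ s → ∀ x2 ∈ Prod.fst '' s,
      ∃ y2, (x2, y2) ∈ s ∧ en y1 y2 ≤ C * en x1 x2 := by
  obtain ⟨ι, hι, u, v, γ, rfl⟩ := hs
  obtain ⟨CH, hCHnn, hCH⟩ := hoff m ι v
  set Rn : ℝ := 1 + ∑ j, Real.sqrt (∑ i, (u j i)^2) with hRn
  have hRnnn : 0 ≤ Rn := by
    rw [hRn]
    have := Finset.sum_nonneg (fun j (_ : j ∈ Finset.univ) => Real.sqrt_nonneg (∑ i, (u j i)^2))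
    linarith
  have hRb : ∀ j, Real.sqrt (∑ i, (u j i)^2) ≤ Rn := by
    intro j
    rw [hRn]
    have := Finset.single_le_sum (f := fun j => Real.sqrt (∑ i, (u j i)^2))
      (fun j _ => Real.sqrt_nonneg _) (Finset.mem_univ j)
    linarith
  refine ⟨CH * Rn, mul_nonneg hCHnn hRnnn, ?_⟩
  intro x1 y1 h1 x2 h2
  set w : ι → ℝ := fun j => γ j - ∑ i, u j i * x2 i with hw
  have hfeas : ∃ z0 : Fin m → ℝ, ∀ j, ∑ i, v j i * z0 i ≤ w j := by
    obtain ⟨⟨x2', y0⟩, hy0, hfst⟩ := h2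
    cases hfst
    exact ⟨y0, fun j => by have := hy0 j; rw [hw]; dsimp only; linarith⟩
  set ε : ℝ := Rn * en x1 x2 with hε
  have hεnn : 0 ≤ ε := mul_nonneg hRnnn (en_nonneg x1 x2)
  have hy1 : ∀ j, ∑ i, v j i * y1 i ≤ w j + ε := by
    intro j
    have ha := h1 j
    have h3 : |∑ i, u j i * (x2 i - x1 i)| ≤ Real.sqrt (∑ i, (u j i)^2) * en x2 x1 :=
      abs_sum_mul_le (u j) x2 x1
    have h4 : ∑ i, u j i * (x2 i - x1 i) = (∑ i, u j i * x2 i) - (∑ i, u j i * x1 i) := by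
      rw [← Finset.sum_sub_distrib]
      exact Finset.sum_congr rfl fun i _ => by ring
    have h5 : Real.sqrt (∑ i, (u j i)^2) * en x2 x1 ≤ Rn * en x1 x2 := by
      rw [en_comm x2 x1]
      exact mul_le_mul_of_nonneg_right (hRb j) (en_nonneg x1 x2)
    have h6 := (abs_le.1 h3).2
    rw [h4] at h6
    rw [hw, hε]; dsimp only
    linarith
  obtain ⟨z, hzfeas, hzclose⟩ := hCH w y1 ε hεnn hfeas hy1
  refine ⟨z, fun j => ?_, ?_⟩
  · have := hzfeas j
    rw [hw] at this; dsimp only at this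
    linarith
  · calc en y1 z ≤ CH * ε := hzclose
      _ = CH * Rn * en x1 x2 := by rw [hε]; ring


/-- Abstract continuation lemma along a segment. -/
lemma seg {n m : ℕ} (F : (Fin n → ℝ) → Set (Fin m → ℝ)) (D : Set (Fin n → ℝ))
    (hDconv : Convex ℝ D) (κ : ℝ)
    (Hc : ∀ xb ∈ D, ∃ ε > 0, ∀ x ∈ D, en x xb < ε →
      ∀ y ∈ F x, ∃ yb ∈ F xb, en y yb ≤ κ * en x xb)
    (He : ∀ xb ∈ D, ∀ x ∈ D, ∀ y ∈ F xb, ∃ θ, 0 < θ ∧ θ ≤ 1 ∧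
      ∃ y2 ∈ F (fun i => xb i + θ * (x i - xb i)),
        en y y2 ≤ κ * en xb (fun i => xb i + θ * (x i - xb i))) :
    ∀ x' ∈ D, ∀ x ∈ D, ∀ y' ∈ F x', ∃ y ∈ F x, en y' y ≤ κ * en x' x := by
  intro x' hx' x hx y' hy'
  classical
  set c : ℝ → (Fin n → ℝ) := fun t i => x' i + t * (x i - x' i) with hc
  have hc0 : c 0 = x' := by funext i; simp [hc]
  have hc1 : c 1 = x := by funext i; simp [hc]
  have hcD : ∀ t, 0 ≤ t → t ≤ 1 → c t ∈ D := by
    intro t ht0 ht1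
    have h := hDconv hx' hx (by linarith : (0:ℝ) ≤ 1 - t) ht0 (by ring)
    have : (1 - t) • x' + t • x = c t := by
      funext i
      simp only [Pi.add_apply, Pi.smul_apply, smul_eq_mul, hc]
      ring
    rwa [this] at h
  set D0 : ℝ := en x' x with hD0
  have hD0nn : 0 ≤ D0 := en_nonneg x' x
  have henc : ∀ s t : ℝ, en (c s) (c t) = |s - t| * D0 := by
    intro s t
    have h := en_line x' (fun i => x i - x' i) s t
    have h2 : en (fun i => x i - x' i) 0 = D0 := by
      rw [hD0, en_comm]
      unfold en
      congr 1
      apply Finset.sum_congr rfl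
      intro i _
      simp
    rw [h2] at h
    exact h
  set A : Set ℝ := {t | (t ∈ Icc (0:ℝ) 1) ∧ ∃ y ∈ F (c t), en y' y ≤ κ * t * D0} with hA
  have h0A : (0:ℝ) ∈ A := by
    refine ⟨⟨le_refl 0, zero_le_one⟩, y', ?_, ?_⟩
    · rw [hc0]; exact hy'
    · rw [en_self]; simp
  have hAne : A.Nonempty := ⟨0, h0A⟩
  have hAbdd : BddAbove A := ⟨1, fun t ht => ht.1.2⟩
  set s := sSup A with hs
  have hs0 : 0 ≤ s := le_csSup hAbdd h0A
  have hs1 : s ≤ 1 := csSup_le hAne (fun t ht => ht.1.2)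
  have hcsD : c s ∈ D := hcD s hs0 hs1
  obtain ⟨ε, hεpos, hεprop⟩ := Hc (c s) hcsD
  have hδpos : 0 < ε / (D0 + 1) := div_pos hεpos (by linarith)
  obtain ⟨t, htA, htlt⟩ := exists_lt_of_lt_csSup hAne (by linarith : s - ε / (D0 + 1) < s)
  have hts : t ≤ s := le_csSup hAbdd htA
  have hent : en (c t) (c s) < ε := by
    rw [henc t s, abs_of_nonpos (by linarith), neg_sub]
    have h1 : (s - t) * D0 ≤ (ε / (D0 + 1)) * D0 :=
      mul_le_mul_of_nonneg_right (by linarith) hD0nn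
    have h2 : (ε / (D0 + 1)) * D0 < (ε / (D0 + 1)) * (D0 + 1) :=
      mul_lt_mul_of_pos_left (by linarith) hδpos
    have h3 : (ε / (D0 + 1)) * (D0 + 1) = ε := div_mul_cancel₀ _ (by linarith)
    linarith
  obtain ⟨yt, hytF, hytb⟩ := htA.2
  obtain ⟨yb, hybF, hybb⟩ := hεprop (c t) (hcD t htA.1.1 htA.1.2) hent yt hytF
  have hsA : s ∈ A := by
    refine ⟨⟨hs0, hs1⟩, yb, hybF, ?_⟩
    have h1 := en_triangle y' yt yb
    have h2 : en (c t) (c s) = (s - t) * D0 := by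
      rw [henc t s, abs_of_nonpos (by linarith), neg_sub]
    rw [h2] at hybb
    calc en y' yb ≤ en y' yt + en yt yb := h1
      _ ≤ κ * t * D0 + κ * ((s - t) * D0) := add_le_add hytb hybb
      _ = κ * s * D0 := by ring
  rcases eq_or_lt_of_le hs1 with hseq | hslt
  · obtain ⟨ys, hysF, hysb⟩ := hsA.2
    refine ⟨ys, ?_, ?_⟩
    · rw [← hc1, ← hseq]; exact hysF
    · calc en y' ys ≤ κ * s * D0 := hysb
        _ = κ * D0 := by rw [hseq]; ring
  · exfalso
    obtain ⟨ys, hysF, hysb⟩ := hsA.2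
    obtain ⟨θ, hθ0, hθ1, y2, hy2F, hy2b⟩ := He (c s) hcsD x hx ys hysF
    set τ := s + θ * (1 - s) with hτ
    have hcτ : (fun i => c s i + θ * (x i - c s i)) = c τ := by
      funext i
      simp only [hc, hτ]
      ring
    have hsτ : s < τ := by
      have : 0 < θ * (1 - s) := mul_pos hθ0 (by linarith)
      rw [hτ]; linarith
    have hτ1 : τ ≤ 1 := by
      have h1 : θ * (1 - s) ≤ 1 * (1 - s) := mul_le_mul_of_nonneg_right hθ1 (by linarith)
      rw [hτ]; linarith
    have hentτ : en (c s) (c τ) = (τ - s) * D0 := by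
      rw [henc s τ, abs_of_nonpos (by linarith), neg_sub]
    rw [hcτ] at hy2F hy2b
    rw [hentτ] at hy2b
    have hτA : τ ∈ A := by
      refine ⟨⟨by linarith, hτ1⟩, y2, hy2F, ?_⟩
      calc en y' y2 ≤ en y' ys + en ys y2 := en_triangle _ _ _
        _ ≤ κ * s * D0 + κ * ((τ - s) * D0) := add_le_add hysb hy2b
        _ = κ * τ * D0 := by ring
    have : τ ≤ s := le_csSup hAbdd hτA
    linarith


/-- Escape an avoided closed set by a euclidean ball. -/
lemma escape {n : ℕ} {B : Set (Fin n → ℝ)} (hB : IsClosed B) {xb : Fin n → ℝ} (hx : xb ∉ B) :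
    ∃ ε > 0, ∀ z, en z xb < ε → z ∉ B := by
  obtain ⟨ε, hε, hball⟩ := Metric.isOpen_iff.1 hB.isOpen_compl xb hx
  refine ⟨ε, hε, fun z hz hzB => ?_⟩
  have h1 : dist z xb ≤ en z xb := by
    rw [dist_pi_le_iff (en_nonneg z xb)]
    intro i
    rw [Real.dist_eq]
    exact abs_sub_le_en z xb i
  exact hball (Metric.mem_ball.2 (lt_of_le_of_lt h1 hz)) hzB

lemma escapeR {B : Set ℝ} (hB : IsClosed B) (hx : (0:ℝ) ∉ B) :
    ∃ ε > 0, ∀ z : ℝ, |z| < ε → z ∉ B := by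
  obtain ⟨ε, hε, hball⟩ := Metric.isOpen_iff.1 hB.isOpen_compl 0 hx
  refine ⟨ε, hε, fun z hz hzB => ?_⟩
  refine hball (Metric.mem_ball.2 ?_) hzB
  rw [Real.dist_eq, sub_zero]
  exact hz

section Main

variable {n m l : ℕ} [NeZero l]
variable (G : (Fin n → ℝ) → Set (Fin m → ℝ))
variable (Gi : Fin l → Set ((Fin n → ℝ) × (Fin m → ℝ)))

/-- Gluing lemma: piecewise Lipschitz plus convex domain gives global Lipschitz. -/
lemma glue
    (hGiPoly : ∀ i, IsPoly2 (Gi i))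
    (hmem : ∀ x y, y ∈ G x ↔ ∃ i, (x, y) ∈ Gi i)
    (hdomconv : Convex ℝ {x | (G x).Nonempty})
    (κ : Fin l → ℝ) (hlip : ∀ i, LipOn G (Prod.fst '' Gi i) (κ i)) :
    LipOn G {x | (G x).Nonempty} (⨆ i, κ i) := by
  classical
  have hlne : Nonempty (Fin l) := ⟨⟨0, Nat.pos_of_ne_zero (NeZero.ne l)⟩⟩
  set K := ⨆ i, κ i with hK
  have hKb : ∀ i, κ i ≤ K := fun i => le_ciSup (Set.finite_range κ).bddAbove i
  set D : Set (Fin n → ℝ) := {x | (G x).Nonempty} with hD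
  set Q : Fin l → Set (Fin n → ℝ) := fun i => Prod.fst '' Gi i with hQ
  have hDQ : ∀ x, x ∈ D ↔ ∃ i, x ∈ Q i := by
    intro x
    constructor
    · rintro ⟨y, hy⟩
      obtain ⟨i, hi⟩ := (hmem x y).1 hy
      exact ⟨i, ⟨(x, y), hi, rfl⟩⟩
    · rintro ⟨i, ⟨⟨x1, y⟩, hp, rfl⟩⟩
      exact ⟨y, (hmem x1 y).2 ⟨i, hp⟩⟩
  have hGclosed : ∀ x, IsClosed (G x) := by
    intro x
    have hGx : G x = (fun y => (x, y)) ⁻¹' (⋃ i, Gi i) := by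
      ext y
      rw [Set.mem_preimage, Set.mem_iUnion]
      exact hmem x y
    rw [hGx]
    exact (isClosed_iUnion_of_finite fun i => (hGiPoly i).isClosed).preimage
      (Continuous.prodMk_right x)
  have hQclosed : ∀ i, IsClosed (Q i) := fun i => ((hGiPoly i).projFst).isClosed
  -- common neighborhood lemma
  have hnear : ∀ xb ∈ D, ∃ ε > 0, ∀ z ∈ D, en z xb < ε → ∃ i0, z ∈ Q i0 ∧ xb ∈ Q i0 := by
    intro xb hxb
    set Bad : Set (Fin n → ℝ) := ⋃ i ∈ {i : Fin l | xb ∉ Q i}, Q i with hBad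
    have hBadClosed : IsClosed Bad :=
      Set.Finite.isClosed_biUnion (Set.toFinite _) (fun i _ => hQclosed i)
    have hxbBad : xb ∉ Bad := by
      intro hmem'
      obtain ⟨i, hi, hxbi⟩ := Set.mem_iUnion₂.1 hmem'
      exact hi hxbi
    obtain ⟨ε, hε, hesc⟩ := escape hBadClosed hxbBad
    refine ⟨ε, hε, fun z hz hlt => ?_⟩
    obtain ⟨i0, hi0⟩ := (hDQ z).1 hz
    refine ⟨i0, hi0, ?_⟩
    by_contra hxbQ
    exact (hesc z hlt) (Set.mem_biUnion hxbQ hi0)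
  constructor
  · intro x hx
    exact ⟨hx, hGclosed x⟩
  · have hseg := seg G D hdomconv K ?_ ?_
    · intro x hx x' hx' y' hy'
      exact hseg x' hx' x hx y' hy'
    · -- Hc
      intro xb hxb
      obtain ⟨ε, hε, hnear'⟩ := hnear xb hxb
      refine ⟨ε, hε, fun x hx hlt y hy => ?_⟩
      obtain ⟨i0, hxQ, hxbQ⟩ := hnear' x hx hlt
      obtain ⟨yb, hybG, hybb⟩ := (hlip i0).2 xb hxbQ x hxQ y hy
      exact ⟨yb, hybG, hybb.trans (mul_le_mul_of_nonneg_right (hKb i0) (en_nonneg x xb))⟩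
    · -- He
      intro xb hxb x hx y hy
      obtain ⟨ε, hε, hnear'⟩ := hnear xb hxb
      set v : Fin n → ℝ := fun i => x i - xb i with hv
      set E : ℝ := en v 0 with hE
      have hEnn : 0 ≤ E := en_nonneg v 0
      set δ : ℝ := ε / (2 * (E + 1)) with hδ
      have hδpos : 0 < δ := div_pos hε (by linarith)
      set θ := min 1 δ with hθ
      have hθpos : 0 < θ := lt_min one_pos hδpos
      have hθ1 : θ ≤ 1 := min_le_left _ _
      set xτ : Fin n → ℝ := fun i => xb i + θ * (x i - xb i) with hxτ
      have hentτ : en xτ xb = θ * E := by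
        have h1 := en_line xb v θ 0
        rw [sub_zero, abs_of_pos hθpos] at h1
        have h0 : (fun i => xb i + 0 * v i) = xb := by funext i; ring
        rw [h0] at h1
        exact h1
      have hlt : en xτ xb < ε := by
        rw [hentτ]
        have h1 : θ * E ≤ δ * E := mul_le_mul_of_nonneg_right (min_le_right _ _) hEnn
        have h2 : δ * (E + 1) = ε / 2 := by
          rw [hδ]; field_simp
        nlinarith
      have hxτD : xτ ∈ D := by
        have h := hdomconv hxb hx (by linarith : (0:ℝ) ≤ 1 - θ) (le_of_lt hθpos) (by ring)
        have heq : (1 - θ) • xb + θ • x = xτ := by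
          funext i
          simp only [Pi.add_apply, Pi.smul_apply, smul_eq_mul, hxτ]
          ring
        rwa [heq] at h
      obtain ⟨i0, hxτQ, hxbQ⟩ := hnear' xτ hxτD hlt
      obtain ⟨y2, hy2G, hy2b⟩ := (hlip i0).2 xτ hxτQ xb hxbQ y hy
      refine ⟨θ, hθpos, hθ1, y2, hy2G, ?_⟩
      exact hy2b.trans (mul_le_mul_of_nonneg_right (hKb i0) (en_nonneg xb xτ))

/-- Per-piece Lipschitz constant from convexity of the restricted graph. -/
lemma piece
    (hGiPoly : ∀ i, IsPoly2 (Gi i))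
    (hmem : ∀ x y, y ∈ G x ↔ ∃ i, (x, y) ∈ Gi i)
    (hGclosed : ∀ x, IsClosed (G x))
    (i : Fin l)
    (hconv : Convex ℝ {p : (Fin n → ℝ) × (Fin m → ℝ) | p.2 ∈ G p.1 ∧ p.1 ∈ Prod.fst '' Gi i}) :
    ∃ κ, 0 ≤ κ ∧ LipOn G (Prod.fst '' Gi i) κ := by
  classical
  have hlne : Nonempty (Fin l) := ⟨⟨0, Nat.pos_of_ne_zero (NeZero.ne l)⟩⟩
  set Qi : Set (Fin n → ℝ) := Prod.fst '' Gi i with hQi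
  have hQipoly : IsPoly Qi := (hGiPoly i).projFst
  set P : Set ((Fin n → ℝ) × (Fin m → ℝ)) := {p | p.2 ∈ G p.1 ∧ p.1 ∈ Qi} with hP
  set R : Fin l → Set ((Fin n → ℝ) × (Fin m → ℝ)) := fun j => {p | p ∈ Gi j ∧ p.1 ∈ Qi} with hR
  have hRpoly : ∀ j, IsPoly2 (R j) := fun j => (hGiPoly j).interCyl hQipoly
  have hPR : ∀ p, p ∈ P ↔ ∃ j, p ∈ R j := by
    intro p
    constructor
    · rintro ⟨hG, hQ⟩
      obtain ⟨j, hj⟩ := (hmem p.1 p.2).1 hG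
      exact ⟨j, hj, hQ⟩
    · rintro ⟨j, hj, hQ⟩
      exact ⟨(hmem p.1 p.2).2 ⟨j, hj⟩, hQ⟩
  have hHoff := fun j => hoffPoly (hRpoly j)
  choose C hCnn hCp using hHoff
  set κi := ⨆ j, C j with hκi
  have hCb : ∀ j, C j ≤ κi := fun j => le_ciSup (Set.finite_range C).bddAbove j
  have hκinn : 0 ≤ κi := le_trans (hCnn (Classical.arbitrary (Fin l)))
    (hCb (Classical.arbitrary (Fin l)))
  set F : (Fin n → ℝ) → Set (Fin m → ℝ) := fun x => {y | y ∈ G x ∧ x ∈ Qi} with hF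
  have hPF : ∀ x y, y ∈ F x ↔ (x, y) ∈ P := fun x y => Iff.rfl
  have hQconv : Convex ℝ Qi := hQipoly.convex
  have hQne : ∀ x ∈ Qi, ∃ y, y ∈ F x := by
    rintro x ⟨⟨x1, y⟩, hp, rfl⟩
    exact ⟨y, (hmem x1 y).2 ⟨i, hp⟩, ⟨(x1, y), hp, rfl⟩⟩
  have hseg := seg F Qi hQconv κi ?_ ?_
  · refine ⟨κi, hκinn, ?_, ?_⟩
    · intro x hx
      obtain ⟨y, hy⟩ := hQne x hx
      exact ⟨⟨y, hy.1⟩, hGclosed x⟩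
    · intro x hx x' hx' y' hy'
      obtain ⟨y, hyF, hyb⟩ := hseg x' hx' x hx y' ⟨hy', hx'⟩
      exact ⟨y, hyF.1, hyb⟩
  · -- Hc
    intro xb hxb
    set Bad : Set (Fin n → ℝ) := ⋃ j ∈ {j : Fin l | xb ∉ Prod.fst '' R j}, Prod.fst '' R j
      with hBad
    have hBadClosed : IsClosed Bad :=
      Set.Finite.isClosed_biUnion (Set.toFinite _) (fun j _ => ((hRpoly j).projFst).isClosed)
    have hxbBad : xb ∉ Bad := by
      intro hmem'
      obtain ⟨j, hj, hxbj⟩ := Set.mem_iUnion₂.1 hmem'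
      exact hj hxbj
    obtain ⟨ε, hε, hesc⟩ := escape hBadClosed hxbBad
    refine ⟨ε, hε, fun x hx hlt y hy => ?_⟩
    obtain ⟨j0, hj0⟩ := (hPR (x, y)).1 hy
    have hxproj : x ∈ Prod.fst '' R j0 := ⟨(x, y), hj0, rfl⟩
    have hxbproj : xb ∈ Prod.fst '' R j0 := by
      by_contra hxbQ
      exact (hesc x hlt) (Set.mem_biUnion hxbQ hxproj)
    obtain ⟨y2, hy2R, hy2b⟩ := hCp j0 x y hj0 xb hxbproj
    refine ⟨y2, (hPR (xb, y2)).2 ⟨j0, hy2R⟩, ?_⟩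
    exact hy2b.trans (mul_le_mul_of_nonneg_right (hCb j0) (en_nonneg x xb))
  · -- He
    intro xb hxb x hx y hy
    obtain ⟨w, hw⟩ := hQne x hx
    set q : ℝ → (Fin n → ℝ) × (Fin m → ℝ) :=
      fun θ => (fun i' => xb i' + θ * (x i' - xb i'), fun i' => y i' + θ * (w i' - y i'))
      with hq
    have hq0 : q 0 = (xb, y) := by
      rw [hq]; dsimp only
      refine Prod.ext ?_ ?_ <;> (funext i'; dsimp only; ring)
    have hqP : ∀ θ : ℝ, 0 ≤ θ → θ ≤ 1 → q θ ∈ P := by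
      intro θ h0 h1
      have hmemP1 : (xb, y) ∈ P := ⟨hy.1, hy.2⟩
      have hmemP2 : (x, w) ∈ P := ⟨hw.1, hw.2⟩
      have h := hconv hmemP1 hmemP2 (by linarith : (0:ℝ) ≤ 1 - θ) h0 (by ring)
      have heq : (1 - θ) • ((xb, y) : (Fin n → ℝ) × (Fin m → ℝ)) + θ • (x, w) = q θ := by
        rw [hq]
        refine Prod.ext ?_ ?_ <;>
          (simp only [Prod.fst_add, Prod.snd_add, Prod.smul_fst, Prod.smul_snd];
           funext i'; simp only [Pi.add_apply, Pi.smul_apply, smul_eq_mul]; ring)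
      rwa [heq] at h
    have hqcont : Continuous q := by
      refine Continuous.prodMk ?_ ?_ <;>
        (refine continuous_pi fun i' => ?_;
         exact continuous_const.add ((continuous_id.mul continuous_const)))
    set S : Fin l → Set ℝ := fun j => Icc (0:ℝ) 1 ∩ q ⁻¹' (R j) with hS
    have hSclosed : ∀ j, IsClosed (S j) :=
      fun j => isClosed_Icc.inter ((hRpoly j).isClosed.preimage hqcont)
    set Bad0 : Set ℝ := ⋃ j ∈ {j : Fin l | (xb, y) ∉ R j}, S j with hBad0
    have hBad0Closed : IsClosed Bad0 :=
      Set.Finite.isClosed_biUnion (Set.toFinite _) (fun j _ => hSclosed j)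
    have h0Bad0 : (0:ℝ) ∉ Bad0 := by
      intro hmem'
      obtain ⟨j, hj, h0j⟩ := Set.mem_iUnion₂.1 hmem'
      refine hj ?_
      have := h0j.2
      rwa [Set.mem_preimage, hq0] at this
    obtain ⟨ε, hε, hesc⟩ := escapeR hBad0Closed h0Bad0
    set θ0 := min 1 (ε / 2) with hθ0def
    have hθ0pos : 0 < θ0 := lt_min one_pos (by linarith)
    have hθ01 : θ0 ≤ 1 := min_le_left _ _
    have hθ0ε : |θ0| < ε := by
      rw [abs_of_pos hθ0pos]
      calc θ0 ≤ ε / 2 := min_le_right _ _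
        _ < ε := by linarith
    obtain ⟨j1, hj1⟩ := (hPR (q θ0)).1 (hqP θ0 (le_of_lt hθ0pos) hθ01)
    have hθ0S : θ0 ∈ S j1 := ⟨⟨le_of_lt hθ0pos, hθ01⟩, hj1⟩
    have hxbyR : (xb, y) ∈ R j1 := by
      by_contra hnot
      exact (hesc θ0 hθ0ε) (Set.mem_biUnion hnot hθ0S)
    have hqproj : (q θ0).1 ∈ Prod.fst '' R j1 := ⟨q θ0, hj1, rfl⟩
    obtain ⟨y2, hy2R, hy2b⟩ := hCp j1 xb y hxbyR (q θ0).1 hqproj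
    refine ⟨θ0, hθ0pos, hθ01, y2, ?_, ?_⟩
    · exact (hPR ((q θ0).1, y2)).2 ⟨j1, hy2R⟩
    · exact hy2b.trans (mul_le_mul_of_nonneg_right (hCb j1) (en_nonneg xb (q θ0).1))

end Main

end Aux
end

theorem stmt0 {n m l : ℕ} [NeZero l]
    (G : (Fin n → ℝ) → Set (Fin m → ℝ))
    (Gi : Fin l → Set ((Fin n → ℝ) × (Fin m → ℝ)))
    (hpoly : ∀ i, ∃ (k : ℕ) (a : Fin k → (Fin n → ℝ) × (Fin m → ℝ)) (β : Fin k → ℝ),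
      Gi i = {p | ∀ j, (∑ t, (a j).1 t * p.1 t) + (∑ t, (a j).2 t * p.2 t) ≤ β j})
    (hgraph : {p : (Fin n → ℝ) × (Fin m → ℝ) | p.2 ∈ G p.1} = ⋃ i, Gi i)
    (hdomconv : Convex ℝ {x | (G x).Nonempty})
    (hconv : ∀ i, Convex ℝ
      {p : (Fin n → ℝ) × (Fin m → ℝ) | p.2 ∈ G p.1 ∧ p.1 ∈ Prod.fst '' Gi i}) :
    (∃ κ : ℝ, 0 ≤ κ ∧ LipOn G {x | (G x).Nonempty} κ) ∧
    ∀ κ : Fin l → ℝ, (∀ i, LipOn G (Prod.fst '' Gi i) (κ i)) →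
      LipOn G {x | (G x).Nonempty} (⨆ i, κ i) := by

  classical
  have hGiPoly : ∀ i, Aux.IsPoly2 (Gi i) := by
    intro i
    obtain ⟨k, a, β, hi⟩ := hpoly i
    exact ⟨Fin k, inferInstance, fun j => (a j).1, fun j => (a j).2, β, hi⟩
  have hmem : ∀ x y, y ∈ G x ↔ ∃ i, (x, y) ∈ Gi i := by
    intro x y
    have := Set.ext_iff.1 hgraph (x, y)
    rw [Set.mem_iUnion] at this
    exact this
  have hGclosed : ∀ x, IsClosed (G x) := by
    intro x
    have hGx : G x = (fun y => (x, y)) ⁻¹' (⋃ i, Gi i) := by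
      ext y
      rw [Set.mem_preimage, Set.mem_iUnion]
      exact hmem x y
    rw [hGx]
    exact (isClosed_iUnion_of_finite fun i => (hGiPoly i).isClosed).preimage
      (Continuous.prodMk_right x)
  constructor
  · have hp := fun i => Aux.piece G Gi hGiPoly hmem hGclosed i (hconv i)
    choose κ hκnn hκlip using hp
    have hlne : Nonempty (Fin l) := ⟨⟨0, Nat.pos_of_ne_zero (NeZero.ne l)⟩⟩
    refine ⟨⨆ i, κ i, ?_, Aux.glue G Gi hGiPoly hmem hdomconv κ hκlip⟩
    exact le_trans (hκnn (Classical.arbitrary (Fin l)))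
      (le_ciSup (Set.finite_range κ).bddAbove (Classical.arbitrary (Fin l)))
  · intro κ hκ
    exact Aux.glue G Gi hGiPoly hmem hdomconv κ hκ
end

section
/- Let G : ℝ^n ⇉ ℝ^m have convex domain equal to a finite union of closed convex sets Q_1,…,Q_l, and suppose G is Lipschitz continuous on each Q_i with constant κ_i. Then for any x, x' in dom G, the segment [x, x'] can be divided into finitely many subsegments, each contained in some Q_i, and consequently G(x') ⊆ G(x) + (max_i κ_i)‖x'−x‖𝔹. -/
open Set

lemma en_eq_dist {k : ℕ} (x y : Fin k → ℝ) :
    en x y = dist ((WithLp.equiv 2 (Fin k → ℝ)).symm x) ((WithLp.equiv 2 (Fin k → ℝ)).symm y) := by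
  rw [EuclideanSpace.dist_eq]
  unfold en
  congr 1
  refine Finset.sum_congr rfl fun i _ => ?_
  rw [Real.dist_eq, sq_abs]
  rfl

lemma en_triangle {k : ℕ} (a b c : Fin k → ℝ) : en a c ≤ en a b + en b c := by
  rw [en_eq_dist, en_eq_dist, en_eq_dist]; exact dist_triangle _ _ _

lemma en_self {k : ℕ} (a : Fin k → ℝ) : en a a = 0 := by simp [en]

theorem stmt1 {n m l : ℕ} [NeZero l]
    (G : (Fin n → ℝ) → Set (Fin m → ℝ))
    (Q : Fin l → Set (Fin n → ℝ))
    (hclosed : ∀ i, IsClosed (Q i)) (hQconv : ∀ i, Convex ℝ (Q i))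
    (hdomconv : Convex ℝ {x | (G x).Nonempty})
    (hdom : {x | (G x).Nonempty} = ⋃ i, Q i)
    (κ : Fin l → ℝ) (hlip : ∀ i, LipOn G (Q i) (κ i)) :
    ∀ x ∈ {x | (G x).Nonempty}, ∀ x' ∈ {x | (G x).Nonempty},
      (∃ (k : ℕ) (θ : Fin (k + 1) → ℝ), θ 0 = 0 ∧ θ (Fin.last k) = 1 ∧ StrictMono θ ∧
        ∀ j : Fin k, ∃ i, ∀ t ∈ Icc (θ j.castSucc) (θ j.succ),
          x + t • (x' - x) ∈ Q i) ∧
      ∀ y' ∈ G x', ∃ y ∈ G x, en y' y ≤ (⨆ i, κ i) * en x' x := by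
  intro x hx x' hx'
  set p : ℝ → (Fin n → ℝ) := fun t => x + t • (x' - x) with hp
  -- the cover of [0,1]
  have hcov : ∀ t ∈ Icc (0:ℝ) 1, ∃ i, p t ∈ Q i := by
    intro t ht
    have h1 : p t ∈ {x | (G x).Nonempty} := hdomconv.add_smul_sub_mem hx hx' ht
    rw [hdom] at h1
    exact mem_iUnion.mp h1
  have hpcont : Continuous p := by
    apply continuous_const.add
    exact continuous_id.smul continuous_const
  set C : Fin l → Set ℝ := fun i => Icc (0:ℝ) 1 ∩ p ⁻¹' Q i with hC
  have hCclosed : ∀ i, IsClosed (C i) := fun i =>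
    isClosed_Icc.inter ((hclosed i).preimage hpcont)
  have hCsub : ∀ i, C i ⊆ Icc (0:ℝ) 1 := fun i => inter_subset_left
  have hCord : ∀ i, ∀ s ∈ C i, ∀ t ∈ C i, ∀ u, s ≤ u → u ≤ t → u ∈ C i := by
    intro i s hs t ht u hsu hut
    have hs1 := hCsub i hs; have ht1 := hCsub i ht
    constructor
    · exact ⟨le_trans hs1.1 hsu, le_trans hut ht1.2⟩
    · rcases eq_or_lt_of_le (le_trans hsu hut) with h | h
      · have : u = s := le_antisymm (h ▸ hut) hsu
        rw [this]; exact hs.2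
      · set θ := (u - s) / (t - s) with hθdef
        have hts : 0 < t - s := by linarith
        have hθmem : θ ∈ Icc (0:ℝ) 1 := by
          constructor
          · apply div_nonneg <;> linarith
          · rw [div_le_one hts]; linarith
        have key := (hQconv i).add_smul_sub_mem hs.2 ht.2 hθmem
        have : p s + θ • (p t - p s) = p u := by
          funext j
          simp only [hp, Pi.add_apply, Pi.smul_apply, Pi.sub_apply, smul_eq_mul, hθdef]
          field_simp
          ring
        rw [this] at key
        exact key
  classical
  set a : Fin l → ℝ := fun i => if h : (C i).Nonempty then sInf (C i) else 0 with ha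
  set b : Fin l → ℝ := fun i => if h : (C i).Nonempty then sSup (C i) else 0 with hb
  have hamem : ∀ i, (C i).Nonempty → a i ∈ C i := by
    intro i h
    rw [ha]; simp only [dif_pos h]
    exact (hCclosed i).csInf_mem h (BddBelow.mono (hCsub i) bddBelow_Icc)
  have hbmem : ∀ i, (C i).Nonempty → b i ∈ C i := by
    intro i h
    rw [hb]; simp only [dif_pos h]
    exact (hCclosed i).csSup_mem h (BddAbove.mono (hCsub i) bddAbove_Icc)
  set E : Finset ℝ :=
    insert 0 (insert 1 (Finset.image a Finset.univ ∪ Finset.image b Finset.univ)) with hE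
  have h0E : (0:ℝ) ∈ E := Finset.mem_insert_self _ _
  have h1E : (1:ℝ) ∈ E := Finset.mem_insert_of_mem (Finset.mem_insert_self _ _)
  have hE01 : ∀ e ∈ E, e ∈ Icc (0:ℝ) 1 := by
    intro e he
    rw [hE] at he
    simp only [Finset.mem_insert, Finset.mem_union, Finset.mem_image, Finset.mem_univ,
      true_and] at he
    rcases he with rfl | rfl | ⟨i, rfl⟩ | ⟨i, rfl⟩
    · exact ⟨le_refl 0, by norm_num⟩
    · exact ⟨by norm_num, le_refl 1⟩
    · by_cases h : (C i).Nonempty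
      · exact hCsub i (hamem i h)
      · rw [ha]; simp only [dif_neg h]; exact ⟨le_refl 0, by norm_num⟩
    · by_cases h : (C i).Nonempty
      · exact hCsub i (hbmem i h)
      · rw [hb]; simp only [dif_neg h]; exact ⟨le_refl 0, by norm_num⟩
  have hpos : 0 < E.card := Finset.card_pos.mpr ⟨0, h0E⟩
  set k := E.card - 1 with hkdef
  have hk : E.card = k + 1 := (Nat.succ_pred_eq_of_pos hpos).symm
  set ι := E.orderIsoOfFin hk with hι
  set θ : Fin (k+1) → ℝ := fun j => (ι j : ℝ) with hθ
  have hθE : ∀ j, θ j ∈ E := fun j => (ι j).2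
  have hθmono : StrictMono θ := fun i j h => ι.strictMono h
  have hsurj : ∀ e ∈ E, ∃ j, θ j = e := by
    intro e he
    obtain ⟨j, hj⟩ := ι.surjective ⟨e, he⟩
    exact ⟨j, by show ((ι j : ℝ)) = e; rw [hj]⟩
  have hθ0 : θ 0 = 0 := by
    obtain ⟨j, hj⟩ := hsurj 0 h0E
    have h1 : θ 0 ≤ θ j := hθmono.monotone (Fin.zero_le j)
    have h2 := (hE01 _ (hθE 0)).1
    rw [hj] at h1
    linarith
  have hθ1 : θ (Fin.last k) = 1 := by
    obtain ⟨j, hj⟩ := hsurj 1 h1E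
    have h1 : θ j ≤ θ (Fin.last k) := hθmono.monotone (Fin.le_last j)
    have h2 := (hE01 _ (hθE (Fin.last k))).2
    rw [hj] at h1
    linarith
  have hnogap : ∀ j : Fin k, ∀ e ∈ E, ¬(θ j.castSucc < e ∧ e < θ j.succ) := by
    rintro j e he ⟨h1, h2⟩
    obtain ⟨j', hj'⟩ := hsurj e he
    rw [← hj'] at h1 h2
    have hl : j.castSucc < j' := hθmono.lt_iff_lt.mp h1
    have hr : j' < j.succ := hθmono.lt_iff_lt.mp h2
    rw [Fin.lt_iff_val_lt_val] at hl hr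
    simp only [Fin.coe_castSucc, Fin.val_succ] at hl hr
    omega
  have hseg : ∀ j : Fin k, ∃ i, ∀ t ∈ Icc (θ j.castSucc) (θ j.succ), p t ∈ Q i := by
    intro j
    have hst : θ j.castSucc < θ j.succ := hθmono (Fin.castSucc_lt_succ (i := j))
    set s := θ j.castSucc; set t := θ j.succ
    set mid := (s + t) / 2 with hmid
    have hms : s < mid := by rw [hmid]; linarith
    have hmt : mid < t := by rw [hmid]; linarith
    have hmid01 : mid ∈ Icc (0:ℝ) 1 := by
      have hs0 := (hE01 _ (hθE j.castSucc)).1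
      have ht1 := (hE01 _ (hθE j.succ)).2
      exact ⟨by linarith, by linarith⟩
    obtain ⟨i, hi⟩ := hcov mid hmid01
    have hmidC : mid ∈ C i := ⟨hmid01, hi⟩
    have hne : (C i).Nonempty := ⟨mid, hmidC⟩
    have haC := hamem i hne
    have hbC := hbmem i hne
    have haE : a i ∈ E := by
      rw [hE]
      exact Finset.mem_insert_of_mem (Finset.mem_insert_of_mem (Finset.mem_union_left _
        (Finset.mem_image.mpr ⟨i, Finset.mem_univ i, rfl⟩)))
    have hbE : b i ∈ E := by
      rw [hE]
      exact Finset.mem_insert_of_mem (Finset.mem_insert_of_mem (Finset.mem_union_right _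
        (Finset.mem_image.mpr ⟨i, Finset.mem_univ i, rfl⟩)))
    have hamid : a i ≤ mid := by
      have : a i = sInf (C i) := by rw [ha]; simp only [dif_pos hne]
      rw [this]
      exact csInf_le (BddBelow.mono (hCsub i) bddBelow_Icc) hmidC
    have hmidb : mid ≤ b i := by
      have : b i = sSup (C i) := by rw [hb]; simp only [dif_pos hne]
      rw [this]
      exact le_csSup (BddAbove.mono (hCsub i) bddAbove_Icc) hmidC
    have has : a i ≤ s := by
      by_contra hcon
      push_neg at hcon
      exact hnogap j (a i) haE ⟨hcon, lt_of_le_of_lt hamid hmt⟩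
    have htb : t ≤ b i := by
      by_contra hcon
      push_neg at hcon
      exact hnogap j (b i) hbE ⟨lt_of_lt_of_le hms hmidb, hcon⟩
    refine ⟨i, fun u hu => ?_⟩
    exact (hCord i _ haC _ hbC u (le_trans has hu.1) (le_trans hu.2 htb)).2
  refine ⟨⟨k, θ, hθ0, hθ1, hθmono, hseg⟩, ?_⟩
  -- second part: the Lipschitz estimate
  set K := ⨆ i, κ i with hK
  have hKle : ∀ i, κ i ≤ K := fun i =>
    le_ciSup (Set.Finite.bddAbove (Set.finite_range κ)) i
  have hd0 : 0 ≤ en x' x := Real.sqrt_nonneg _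
  have hen_line : ∀ s t : ℝ, en (p t) (p s) = |t - s| * en x' x := by
    intro s t
    unfold en
    have heq : ∀ i : Fin n, p t i - p s i = (t - s) * (x' i - x i) := by
      intro i
      simp only [hp, Pi.add_apply, Pi.smul_apply, Pi.sub_apply, smul_eq_mul]
      ring
    rw [show (∑ i, (p t i - p s i) ^ 2) = (t - s)^2 * ∑ i, (x' i - x i)^2 by
      rw [Finset.mul_sum]; exact Finset.sum_congr rfl fun i _ => by rw [heq i]; ring]
    rw [Real.sqrt_mul (sq_nonneg _), Real.sqrt_sq_eq_abs]
  have hp0 : p 0 = x := by rw [hp]; simp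
  have hp1 : p 1 = x' := by rw [hp]; simp
  have main : ∀ j : Fin (k+1), ∀ y' ∈ G (p (θ j)), ∃ y ∈ G x,
      en y' y ≤ K * (θ j * en x' x) := by
    intro j
    induction j using Fin.induction with
    | zero =>
      intro y' hy'
      rw [hθ0, hp0] at hy'
      refine ⟨y', hy', ?_⟩
      rw [en_self, hθ0]
      simp
    | succ j IH =>
      intro y' hy'
      obtain ⟨i, hi⟩ := hseg j
      have hst : θ j.castSucc < θ j.succ := hθmono (Fin.castSucc_lt_succ (i := j))
      have hx1 : p (θ j.castSucc) ∈ Q i := hi _ ⟨le_refl _, le_of_lt hst⟩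
      have hx2 : p (θ j.succ) ∈ Q i := hi _ ⟨le_of_lt hst, le_refl _⟩
      obtain ⟨y1, hy1, hle1⟩ := (hlip i).2 _ hx1 _ hx2 y' hy'
      obtain ⟨y, hy, hle2⟩ := IH y1 hy1
      refine ⟨y, hy, ?_⟩
      have htri := en_triangle y' y1 y
      have hlin := hen_line (θ j.castSucc) (θ j.succ)
      rw [hlin] at hle1
      have habs : |θ j.succ - θ j.castSucc| = θ j.succ - θ j.castSucc :=
        abs_of_nonneg (by linarith)
      rw [habs] at hle1
      have hΔd : 0 ≤ (θ j.succ - θ j.castSucc) * en x' x :=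
        mul_nonneg (by linarith) hd0
      have h1 : κ i * ((θ j.succ - θ j.castSucc) * en x' x) ≤
          K * ((θ j.succ - θ j.castSucc) * en x' x) :=
        mul_le_mul_of_nonneg_right (hKle i) hΔd
      calc en y' y ≤ en y' y1 + en y1 y := htri
        _ ≤ K * ((θ j.succ - θ j.castSucc) * en x' x) + K * (θ j.castSucc * en x' x) := by
            exact add_le_add (le_trans hle1 h1) hle2
        _ = K * (θ j.succ * en x' x) := by ring
  intro y' hy'
  have := main (Fin.last k)
  rw [hθ1, hp1] at this
  obtain ⟨y, hy, hle⟩ := this y' hy'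
  exact ⟨y, hy, by simpa using hle⟩
end

section
/- Let Y⁰ = {y ∈ ℝ^m : ‖Aᵀy‖_∞ ≤ 1} for a real m×n matrix A, and let F be a nonempty convex subset of Y⁰. Define 𝒜⁺(F) = {i : A_iᵀy = 1 for all y ∈ F}, 𝒜⁻(F) = {i : A_iᵀy = −1 for all y ∈ F}, and 𝒜⁰(F) = {i : −1 < A_iᵀy < 1 for some y ∈ F}. Then (𝒜⁺(F), 𝒜⁰(F), 𝒜⁻(F)) is a partition of the index set {1,…,n}. -/
open Set

theorem Set.OrdConnected.exists_mem_Ioo_of_subset_Icc {α : Type*} [LinearOrder α]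
    [DenselyOrdered α] {s : Set α} {a b x y : α} (hs : s.OrdConnected) (hsub : s ⊆ Icc a b)
    (hx : x ∈ s) (hxb : x ≠ b) (hy : y ∈ s) (hya : y ≠ a) : ∃ z ∈ s, z ∈ Ioo a b := by
  obtain ⟨hax, hxb'⟩ := hsub hx
  obtain ⟨hay, hyb⟩ := hsub hy
  rcases hax.lt_or_eq with hax | rfl
  · exact ⟨x, hx, hax, hxb'.lt_of_ne hxb⟩
  rcases hyb.lt_or_eq with hyb | rfl
  · exact ⟨y, hy, hay.lt_of_ne' hya, hyb⟩
  obtain ⟨z, hxz, hzy⟩ := exists_between (hxb'.lt_of_ne hxb)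
  exact ⟨z, hs.out hx hy ⟨hxz.le, hzy.le⟩, hxz, hzy⟩

theorem isLinearMap_colDot {m n : ℕ} (A : Matrix (Fin m) (Fin n) ℝ) (i : Fin n) :
    IsLinearMap ℝ (colDot A i) where
  map_add y z := by simp only [colDot, Pi.add_apply, mul_add, Finset.sum_add_distrib]
  map_smul c y := by
    simp only [colDot, Pi.smul_apply, smul_eq_mul, Finset.mul_sum]
    exact Finset.sum_congr rfl fun k _ => by ring

theorem mem_Azero_of_notMem_Aplus_of_notMem_Aminus {m n : ℕ} {A : Matrix (Fin m) (Fin n) ℝ}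
    {F : Set (Fin m → ℝ)} (hconv : Convex ℝ F) (hsub : F ⊆ Ydual A) {i : Fin n}
    (hp : i ∉ Aplus A F) (hm : i ∉ Aminus A F) : i ∈ Azero A F := by
  simp only [Aplus, Aminus, mem_ofPred_eq, not_forall] at hp hm
  obtain ⟨y₁, hy₁, hy₁_ne⟩ := hp
  obtain ⟨y₂, hy₂, hy₂_ne⟩ := hm
  have hImage : colDot A i '' F ⊆ Icc (-1) 1 := by
    rintro _ ⟨y, hy, rfl⟩
    exact abs_le.mp (hsub hy i)
  obtain ⟨_, ⟨y, hy, rfl⟩, hIoo⟩ :=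
    ((hconv.is_linear_image (isLinearMap_colDot A i)).ordConnected).exists_mem_Ioo_of_subset_Icc
      hImage (mem_image_of_mem _ hy₁) hy₁_ne (mem_image_of_mem _ hy₂) hy₂_ne
  exact ⟨y, hy, hIoo⟩

theorem stmt2 {m n : ℕ} (A : Matrix (Fin m) (Fin n) ℝ)
    (F : Set (Fin m → ℝ)) (hne : F.Nonempty) (hconv : Convex ℝ F) (hsub : F ⊆ Ydual A) :
    (Aplus A F ∩ Azero A F = ∅) ∧ (Aplus A F ∩ Aminus A F = ∅) ∧
    (Azero A F ∩ Aminus A F = ∅) ∧ (Aplus A F ∪ Azero A F ∪ Aminus A F = univ) := by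
  obtain ⟨y₀, hy₀⟩ := hne
  refine ⟨?_, ?_, ?_, ?_⟩
  · refine eq_empty_of_forall_notMem fun i ⟨hp, y, hy, hlt, hgt⟩ => ?_
    linarith [hp y hy]
  · refine eq_empty_of_forall_notMem fun i ⟨hp, hm⟩ => ?_
    linarith [hp y₀ hy₀, hm y₀ hy₀]
  · refine eq_empty_of_forall_notMem fun i ⟨⟨y, hy, hlt, hgt⟩, hm⟩ => ?_
    linarith [hm y hy]
  · refine eq_univ_of_forall fun i => ?_
    by_cases hp : i ∈ Aplus A F
    · exact Or.inl (Or.inl hp)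
    by_cases hm : i ∈ Aminus A F
    · exact Or.inr hm
    exact Or.inl (Or.inr (mem_Azero_of_notMem_Aplus_of_notMem_Aminus hconv hsub hp hm))
end

section
/- Let A be an m×n real matrix of full row rank and let S(λ, b) be the optimal solution set of min_x ‖x‖₁ + (1/(2λ))‖Ax−b‖² for λ > 0, and of min{‖x‖₁ : Ax = b} for λ = 0. Then for every (λ,b) ∈ ℝ₊ × ℝ^m: gph S = {(λ,b,x) : λ ≥ 0, 0 ∈ ∂‖·‖₁(x) + range Aᵀ, Aᵀ(b − Ax) ∈ λ∂‖·‖₁(x)}, where ∂‖·‖₁ is the convex subdifferential of the ℓ₁ norm. -/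
open Set

open Matrix

theorem mem_l1subdiff_of {k : ℕ} (x v : Fin k → ℝ)
    (h : ∀ i, |v i| ≤ 1 ∧ v i * x i = |x i|) : v ∈ l1subdiff x := by
  intro z
  have : ∀ i, |x i| + v i * (z i - x i) ≤ |z i| := by
    intro i
    have h1 := (h i).1
    have h2 := (h i).2
    have : v i * z i ≤ |z i| := by
      calc v i * z i ≤ |v i * z i| := le_abs_self _
      _ = |v i| * |z i| := abs_mul _ _
      _ ≤ 1 * |z i| := by apply mul_le_mul_of_nonneg_right h1 (abs_nonneg _)
      _ = |z i| := one_mul _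
    nlinarith
  calc l1 x + ∑ i, v i * (z i - x i) = ∑ i, (|x i| + v i * (z i - x i)) := by
        rw [l1, ← Finset.sum_add_distrib]
  _ ≤ ∑ i, |z i| := Finset.sum_le_sum fun i _ => this i
  _ = l1 z := rfl

theorem sign_prop (c : ℝ) : |Real.sign c| ≤ 1 ∧ Real.sign c * c = |c| := by
  rcases lt_trichotomy c 0 with h | h | h
  · simp [Real.sign_of_neg h, abs_of_neg h]
  · simp [h]
  · simp [Real.sign_of_pos h, abs_of_pos h]
theorem swap_sum' {m n : ℕ} (A : Matrix (Fin m) (Fin n) ℝ) (z : Fin n → ℝ) (w : Fin m → ℝ) :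
    ∑ k, (∑ i, A k i * z i) * w k = ∑ i, z i * (∑ k, A k i * w k) := by
  simp_rw [Finset.sum_mul, Finset.mul_sum]
  rw [Finset.sum_comm]
  exact Finset.sum_congr rfl fun i _ => Finset.sum_congr rfl fun k _ => by ring

theorem certificate {m n : ℕ} (A : Matrix (Fin m) (Fin n) ℝ) (x : Fin n → ℝ)
    (hmin : ∀ d : Fin n → ℝ, A.mulVec d = 0 → l1 x ≤ l1 (x + d)) :
    ∃ v : Fin n → ℝ, (∀ i, |v i| ≤ 1 ∧ v i * x i = |x i|) ∧
      ∃ u : Fin m → ℝ, ∀ i, v i = ∑ k, A k i * u k := by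
  classical
  set B : Set (Fin n → ℝ) := {v | ∀ i, |v i| ≤ 1 ∧ v i * x i = |x i|} with hB
  set R : Set (Fin n → ℝ) := (LinearMap.range (Matrix.mulVecLin Aᵀ) : Set (Fin n → ℝ)) with hR
  have hRmem : ∀ v, v ∈ R ↔ ∃ u : Fin m → ℝ, ∀ i, v i = ∑ k, A k i * u k := by
    intro v
    constructor
    · rintro ⟨u, rfl⟩
      exact ⟨u, fun i => rfl⟩
    · rintro ⟨u, hu⟩
      exact ⟨u, by funext i; exact (hu i).symm⟩
  by_contra hc
  push_neg at hc
  have hdisj : Disjoint B R := by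
    rw [Set.disjoint_left]
    intro v hv hvR
    obtain ⟨u', hu'⟩ := (hRmem v).mp hvR
    obtain ⟨i, hi⟩ := hc v hv u'
    exact hi (hu' i)
  -- B is convex and compact
  have hBconv : Convex ℝ B := by
    intro p hp q hq a b ha hb hab
    intro i
    constructor
    · calc |(a • p + b • q) i| = |a * p i + b * q i| := rfl
      _ ≤ |a * p i| + |b * q i| := abs_add_le _ _
      _ = a * |p i| + b * |q i| := by
          rw [abs_mul, abs_mul, abs_of_nonneg ha, abs_of_nonneg hb]
      _ ≤ a * 1 + b * 1 := by
          have := (hp i).1; have := (hq i).1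
          gcongr
      _ = 1 := by linarith
    · have h1 := (hp i).2; have h2 := (hq i).2
      show (a * p i + b * q i) * x i = |x i|
      calc (a * p i + b * q i) * x i = a * (p i * x i) + b * (q i * x i) := by ring
      _ = a * |x i| + b * |x i| := by rw [h1, h2]
      _ = |x i| := by rw [← add_mul, hab, one_mul]
  have hBcomp : IsCompact B := by
    have : B = Set.pi Set.univ (fun i => {c : ℝ | |c| ≤ 1 ∧ c * x i = |x i|}) := by
      ext v; simp [hB, Set.mem_univ_pi]
    rw [this]
    apply isCompact_univ_pi
    intro i
    apply IsCompact.of_isClosed_subset isCompact_Icc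
    · exact IsClosed.inter (isClosed_le continuous_abs continuous_const)
        (isClosed_eq (by continuity) continuous_const)
    · intro c hc
      exact abs_le.mp hc.1
  have hRconv : Convex ℝ R := (LinearMap.range (Matrix.mulVecLin Aᵀ)).convex
  have hRclosed : IsClosed R := (LinearMap.range (Matrix.mulVecLin Aᵀ)).closed_of_finiteDimensional
  obtain ⟨f, u, v, hfu, huv, hfv⟩ :=
    geometric_hahn_banach_compact_closed hBconv hBcomp hRconv hRclosed hdisj
  -- f vanishes on R
  have hf0 : ∀ r ∈ R, f r = 0 := by
    intro r hr
    by_contra hfr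
    have hmem : ((v - 1) / f r) • r ∈ R := by
      exact Submodule.smul_mem _ _ hr
    have := hfv _ hmem
    rw [_root_.map_smul, smul_eq_mul, div_mul_cancel₀ _ hfr] at this
    linarith
  have hv0 : v < 0 := by
    have h0 : (0 : Fin n → ℝ) ∈ R := (LinearMap.range (Matrix.mulVecLin Aᵀ)).zero_mem
    have := hfv 0 h0
    simpa using this
  -- represent f by w
  set w : Fin n → ℝ := fun i => f (Pi.single i 1) with hw
  have hfw : ∀ y : Fin n → ℝ, f y = ∑ i, y i * w i := by
    intro y
    have hy : y = ∑ i, y i • (Pi.single i 1 : Fin n → ℝ) := by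
      funext j
      simp [Finset.sum_apply, Pi.single_apply]
    calc f y = f (∑ i, y i • (Pi.single i 1 : Fin n → ℝ)) := by rw [← hy]
    _ = ∑ i, y i • f (Pi.single i 1) := by rw [map_sum]; simp
    _ = ∑ i, y i * w i := rfl
  -- A.mulVec w = 0
  have hAw : A.mulVec w = 0 := by
    have key : ∀ u' : Fin m → ℝ, ∑ k, u' k * A.mulVec w k = 0 := by
      intro u'
      have hmem : Aᵀ.mulVec u' ∈ R := ⟨u', rfl⟩
      have h0 := hf0 _ hmem
      rw [hfw] at h0
      have : ∑ i, Aᵀ.mulVec u' i * w i = ∑ k, u' k * A.mulVec w k := by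
        have := swap_sum' Aᵀ u' w
        simpa [Matrix.mulVec, dotProduct, Matrix.transpose_apply] using this
      rw [this] at h0
      exact h0
    have h2 := key (A.mulVec w)
    funext k
    have := Finset.sum_eq_zero_iff_of_nonneg
      (fun k _ => mul_self_nonneg (A.mulVec w k)) |>.mp h2 k (Finset.mem_univ k)
    simpa [mul_self_eq_zero] using this
  -- the maximizing subgradient
  set vs : Fin n → ℝ := fun i => if x i = 0 then Real.sign (w i) else Real.sign (x i) with hvs
  have hvsB : vs ∈ B := by
    intro i
    by_cases h : x i = 0
    · simp only [hvs, if_pos h, h]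
      exact ⟨(sign_prop _).1, by simp⟩
    · simp only [hvs, if_neg h]
      exact sign_prop (x i)
  have hs : ∑ i, vs i * w i < 0 := by
    have := hfu vs hvsB
    rw [hfw] at this
    linarith
  -- choose small t
  obtain ⟨t, ht0, htle⟩ : ∃ t : ℝ, 0 < t ∧ ∀ i, x i ≠ 0 → t * |w i| < |x i| := by
    set g : Fin n → ℝ := fun i => if x i = 0 then 1 else |x i| / (2 * (|w i| + 1)) with hg
    have hgpos : ∀ i, 0 < g i := by
      intro i
      by_cases h : x i = 0
      · simp [hg, h]
      · simp only [hg, if_neg h]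
        apply div_pos (abs_pos.mpr h)
        positivity
    set s := insert (1:ℝ) (Finset.image g Finset.univ) with hsdef
    have hsne : s.Nonempty := ⟨1, Finset.mem_insert_self _ _⟩
    refine ⟨s.min' hsne, ?_, ?_⟩
    · have := s.min'_mem hsne
      rcases Finset.mem_insert.mp this with h | h
      · rw [h]; norm_num
      · obtain ⟨i, _, hi⟩ := Finset.mem_image.mp h
        rw [← hi]; exact hgpos i
    · intro i hxi
      have hle : s.min' hsne ≤ g i :=
        s.min'_le _ (Finset.mem_insert_of_mem (Finset.mem_image_of_mem g (Finset.mem_univ i)))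
      have hgi : g i = |x i| / (2 * (|w i| + 1)) := by simp [hg, hxi]
      have h1 : g i * |w i| < |x i| := by
        rw [hgi]
        rw [div_mul_eq_mul_div, div_lt_iff₀ (by positivity)]
        have : 0 < |x i| := abs_pos.mpr hxi
        nlinarith [abs_nonneg (w i)]
      calc s.min' hsne * |w i| ≤ g i * |w i| :=
            mul_le_mul_of_nonneg_right hle (abs_nonneg _)
      _ < |x i| := h1
  -- contradiction with hmin
  have hAd : A.mulVec (t • w) = 0 := by
    rw [Matrix.mulVec_smul, hAw]; simp
  have hl1 : l1 (x + t • w) = l1 x + t * ∑ i, vs i * w i := by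
    have : ∀ i, |x i + t * w i| = |x i| + t * (vs i * w i) := by
      intro i
      by_cases h : x i = 0
      · simp only [hvs, if_pos h, h, zero_add, abs_zero]
        rw [abs_mul, abs_of_pos ht0, ← (sign_prop (w i)).2]
      · have hw' := htle i h
        simp only [hvs, if_neg h]
        rcases lt_or_gt_of_ne h with hneg | hpos
        · rw [Real.sign_of_neg hneg, abs_of_neg hneg]
          have habs : x i + t * w i < 0 := by
            have : t * w i ≤ t * |w i| := by
              apply mul_le_mul_of_nonneg_left (le_abs_self _) ht0.le
            have h2 : |x i| = -x i := abs_of_neg hneg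
            linarith [hw', this]
          rw [abs_of_neg habs]; ring
        · rw [Real.sign_of_pos hpos, abs_of_pos hpos]
          have habs : 0 < x i + t * w i := by
            have : -(t * |w i|) ≤ t * w i := by
              rw [neg_le]
              calc -(t * w i) = t * (-w i) := by ring
              _ ≤ t * |w i| := by
                  apply mul_le_mul_of_nonneg_left (neg_le_abs _) ht0.le
            have h2 : |x i| = x i := abs_of_pos hpos
            linarith [hw', this]
          rw [abs_of_pos habs]; ring
    calc l1 (x + t • w) = ∑ i, |x i + t * w i| := rfl
    _ = ∑ i, (|x i| + t * (vs i * w i)) := Finset.sum_congr rfl fun i _ => this i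
    _ = l1 x + t * ∑ i, vs i * w i := by
        rw [Finset.sum_add_distrib, Finset.mul_sum]; rfl
  have := hmin (t • w) hAd
  rw [hl1] at this
  nlinarith

theorem wzero {m n : ℕ} (A : Matrix (Fin m) (Fin n) ℝ) (hrank : A.rank = m)
    (w : Fin m → ℝ) (h : ∀ i, ∑ k, A k i * w k = 0) : w = 0 := by
  have hsurj : LinearMap.range A.mulVecLin = ⊤ := by
    apply Submodule.eq_top_of_finrank_eq
    rw [← Matrix.rank, hrank]
    simp [Module.finrank_pi]
  obtain ⟨z, hz⟩ : ∃ z, A.mulVec z = w := by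
    have := hsurj ▸ Submodule.mem_top (x := w) (R := ℝ)
    simpa [LinearMap.mem_range] using this
  have h2 : ∑ k, w k * w k = 0 := by
    calc ∑ k, w k * w k = ∑ k, (∑ i, A k i * z i) * w k := by
          rw [← hz]; rfl
    _ = ∑ i, z i * (∑ k, A k i * w k) := swap_sum' A z w
    _ = 0 := by simp [h]
  funext k
  have := Finset.sum_eq_zero_iff_of_nonneg (fun k _ => mul_self_nonneg (w k)) |>.mp h2 k (Finset.mem_univ k)
  simpa [mul_self_eq_zero] using this

theorem sqnorm_nonneg' {k : ℕ} (y : Fin k → ℝ) : 0 ≤ sqnorm y :=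
  Finset.sum_nonneg fun i _ => sq_nonneg _

theorem sqnorm_smul' {k : ℕ} (t : ℝ) (y : Fin k → ℝ) : sqnorm (t • y) = t ^ 2 * sqnorm y := by
  simp [sqnorm, Finset.mul_sum, mul_pow]

theorem expand' {m n : ℕ} (A : Matrix (Fin m) (Fin n) ℝ) (b : Fin m → ℝ) (x z : Fin n → ℝ) :
    sqnorm (A.mulVec z - b) = sqnorm (A.mulVec x - b)
      + 2 * ∑ i, (z i - x i) * colDot A i (A.mulVec x - b)
      + sqnorm (A.mulVec z - A.mulVec x) := by
  have hd : ∀ k, (A.mulVec z - A.mulVec x) k = ∑ i, A k i * (z i - x i) := by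
    intro k
    simp [Matrix.mulVec, dotProduct, Finset.sum_sub_distrib, mul_sub]
  have hcross : ∑ k, (A.mulVec x - b) k * (A.mulVec z - A.mulVec x) k
      = ∑ i, (z i - x i) * colDot A i (A.mulVec x - b) := by
    calc ∑ k, (A.mulVec x - b) k * (A.mulVec z - A.mulVec x) k
        = ∑ k, (∑ i, A k i * (z i - x i)) * (A.mulVec x - b) k := by
          refine Finset.sum_congr rfl fun k _ => ?_
          rw [hd k]; ring
    _ = ∑ i, (z i - x i) * colDot A i (A.mulVec x - b) := swap_sum' A _ _
  have hpt : ∀ k, (A.mulVec z - b) k ^ 2 = (A.mulVec x - b) k ^ 2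
      + 2 * ((A.mulVec x - b) k * (A.mulVec z - A.mulVec x) k)
      + (A.mulVec z - A.mulVec x) k ^ 2 := by
    intro k
    have h : (A.mulVec z - b) k = (A.mulVec x - b) k + (A.mulVec z - A.mulVec x) k := by
      simp only [Pi.sub_apply]; ring
    rw [h]; ring
  calc sqnorm (A.mulVec z - b) = ∑ k, (A.mulVec z - b) k ^ 2 := rfl
  _ = ∑ k, ((A.mulVec x - b) k ^ 2
      + 2 * ((A.mulVec x - b) k * (A.mulVec z - A.mulVec x) k)
      + (A.mulVec z - A.mulVec x) k ^ 2) := Finset.sum_congr rfl fun k _ => hpt k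
  _ = sqnorm (A.mulVec x - b)
      + 2 * ∑ i, (z i - x i) * colDot A i (A.mulVec x - b)
      + sqnorm (A.mulVec z - A.mulVec x) := by
      rw [Finset.sum_add_distrib, Finset.sum_add_distrib, ← Finset.mul_sum, hcross]
      rfl

theorem small_t (a q : ℝ) (hq : 0 ≤ q)
    (key : ∀ t : ℝ, 0 < t → t ≤ 1 → 0 ≤ a + t * q) : 0 ≤ a := by
  by_contra hneg
  push_neg at hneg
  have hta : 0 < (-a) / (2 * (q + 1)) := div_pos (by linarith) (by linarith)
  have ht0 : 0 < min 1 ((-a) / (2 * (q + 1))) := lt_min one_pos hta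
  have hk := key _ ht0 (min_le_left _ _)
  have htle : min 1 ((-a) / (2 * (q + 1))) ≤ (-a) / (2 * (q + 1)) := min_le_right _ _
  have h6 : min 1 ((-a) / (2 * (q + 1))) * q ≤ ((-a) / (2 * (q + 1))) * q :=
    mul_le_mul_of_nonneg_right htle hq
  have h7 : ((-a) / (2 * (q + 1))) * q < -a := by
    rw [div_mul_eq_mul_div, div_lt_iff₀ (by linarith)]
    nlinarith
  linarith

theorem stmt6 {m n : ℕ} (A : Matrix (Fin m) (Fin n) ℝ) (hrank : A.rank = m) :
    ∀ lam : ℝ, 0 ≤ lam → ∀ (b : Fin m → ℝ) (x : Fin n → ℝ),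
      x ∈ Sol A lam b ↔
        ((∃ v ∈ l1subdiff x, ∃ u : Fin m → ℝ, ∀ i, v i + colDot A i u = 0) ∧
         (∃ v ∈ l1subdiff x, ∀ i, resid A b x i = lam * v i)) := by
  intro lam hlam b x
  by_cases h0 : lam = 0
  · -- basis pursuit case
    subst h0
    simp only [Sol, if_pos rfl, Set.mem_setOf_eq]
    constructor
    · rintro ⟨hfeas, hopt⟩
      constructor
      · have hmin : ∀ d : Fin n → ℝ, A.mulVec d = 0 → l1 x ≤ l1 (x + d) := by
          intro d hd
          apply hopt
          rw [Matrix.mulVec_add, hd, add_zero, hfeas]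
        obtain ⟨v, hvB, u, hu⟩ := certificate A x hmin
        refine ⟨v, mem_l1subdiff_of x v hvB, -u, fun i => ?_⟩
        rw [colDot]
        simp only [Pi.neg_apply, mul_neg, Finset.sum_neg_distrib]
        rw [← hu i]; ring
      · refine ⟨fun i => Real.sign (x i),
          mem_l1subdiff_of x _ (fun i => sign_prop (x i)), fun i => ?_⟩
        have hz : b - A.mulVec x = 0 := by rw [hfeas]; simp
        rw [resid, hz]
        simp [colDot]
    · rintro ⟨⟨v, hv, u, hu⟩, ⟨v', _, hres⟩⟩
      have hfeas : A.mulVec x = b := by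
        have h1 : ∀ i, ∑ k, A k i * (b - A.mulVec x) k = 0 := by
          intro i
          have h2 := hres i
          rw [resid, colDot] at h2
          rw [h2]; ring
        have h3 := wzero A hrank _ h1
        have h4 : b - A.mulVec x = 0 := h3
        funext k
        have := congrFun h4 k
        simp only [Pi.sub_apply, Pi.zero_apply, sub_eq_zero] at this
        exact this.symm
      refine ⟨hfeas, fun z hz => ?_⟩
      have hsub := hv z
      have hzero : ∑ i, v i * (z i - x i) = 0 := by
        have hveq : ∀ i, v i = -∑ k, A k i * u k := by
          intro i
          have := hu i
          rw [colDot] at this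
          linarith
        have hAzx : ∀ k, ∑ i, A k i * (z i - x i) = 0 := by
          intro k
          have : A.mulVec z k - A.mulVec x k = 0 := by rw [hz, hfeas]; ring
          rw [← this]
          simp [Matrix.mulVec, dotProduct, Finset.sum_sub_distrib, mul_sub]
        calc ∑ i, v i * (z i - x i) = -∑ i, (z i - x i) * (∑ k, A k i * u k) := by
              rw [← Finset.sum_neg_distrib]
              refine Finset.sum_congr rfl fun i _ => ?_
              rw [hveq i]; ring
        _ = -∑ k, (∑ i, A k i * (z i - x i)) * u k := by rw [swap_sum']
        _ = 0 := by
              simp only [hAzx]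
              simp
      linarith
  · -- lam > 0 case
    have hlam' : 0 < lam := lt_of_le_of_ne hlam (Ne.symm h0)
    have h2lam : (0:ℝ) < 2 * lam := by linarith
    simp only [Sol, if_neg h0, Set.mem_setOf_eq]
    have hresid : ∀ i, resid A b x i = -colDot A i (A.mulVec x - b) := by
      intro i
      rw [resid, colDot, colDot, ← Finset.sum_neg_distrib]
      refine Finset.sum_congr rfl fun k _ => ?_
      simp only [Pi.sub_apply]; ring
    constructor
    · intro hopt
      set v : Fin n → ℝ := fun i => resid A b x i / lam with hvdef
      have hvsub : v ∈ l1subdiff x := by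
        intro z
        set S := ∑ i, v i * (z i - x i) with hSdef
        set C := ∑ i, (z i - x i) * colDot A i (A.mulVec x - b) with hCdef
        have hSC : S = -C / lam := by
          rw [hSdef, hCdef, neg_div, Finset.sum_div, ← Finset.sum_neg_distrib]
          refine Finset.sum_congr rfl fun i _ => ?_
          rw [hvdef]
          simp only
          rw [hresid i]
          ring
        set Q := sqnorm (A.mulVec z - A.mulVec x) with hQdef
        have hQ0 : 0 ≤ Q := sqnorm_nonneg' _
        have key : ∀ t : ℝ, 0 < t → t ≤ 1 →
            0 ≤ (l1 z - l1 x - S) + t * (1 / (2 * lam) * Q) := by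
          intro t ht0 ht1
          have hstep := hopt (x + t • (z - x))
          have hAzt : A.mulVec (x + t • (z - x)) - A.mulVec x
              = t • (A.mulVec z - A.mulVec x) := by
            rw [Matrix.mulVec_add, Matrix.mulVec_smul, Matrix.mulVec_sub]
            funext k
            simp only [Pi.add_apply, Pi.sub_apply, Pi.smul_apply, smul_eq_mul]
            ring
          have hexp := expand' A b x (x + t • (z - x))
          rw [hAzt, sqnorm_smul'] at hexp
          have hcross2 : ∑ i, ((x + t • (z - x)) i - x i) * colDot A i (A.mulVec x - b)
              = t * C := by
            rw [hCdef, Finset.mul_sum]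
            refine Finset.sum_congr rfl fun i _ => ?_
            simp only [Pi.add_apply, Pi.smul_apply, Pi.sub_apply, smul_eq_mul]
            ring
          rw [hcross2] at hexp
          have hl1t : l1 (x + t • (z - x)) ≤ (1 - t) * l1 x + t * l1 z := by
            have hpt : ∀ i, |(x + t • (z - x)) i| ≤ (1 - t) * |x i| + t * |z i| := by
              intro i
              have heq : (x + t • (z - x)) i = (1 - t) * x i + t * z i := by
                simp only [Pi.add_apply, Pi.smul_apply, Pi.sub_apply, smul_eq_mul]
                ring
              rw [heq]
              calc |(1 - t) * x i + t * z i| ≤ |(1 - t) * x i| + |t * z i| := abs_add_le _ _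
              _ = (1 - t) * |x i| + t * |z i| := by
                  rw [abs_mul, abs_mul, abs_of_nonneg (by linarith : (0:ℝ) ≤ 1 - t),
                    abs_of_nonneg ht0.le]
            calc l1 (x + t • (z - x)) = ∑ i, |(x + t • (z - x)) i| := rfl
            _ ≤ ∑ i, ((1 - t) * |x i| + t * |z i|) := Finset.sum_le_sum fun i _ => hpt i
            _ = (1 - t) * l1 x + t * l1 z := by
                rw [Finset.sum_add_distrib, ← Finset.mul_sum, ← Finset.mul_sum]; rfl
          rw [hexp] at hstep
          have hsplit : 1 / (2 * lam) * (sqnorm (A.mulVec x - b) + 2 * (t * C) + t ^ 2 * Q)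
              = 1 / (2 * lam) * sqnorm (A.mulVec x - b) + t * (C / lam)
                + t * (t * (1 / (2 * lam) * Q)) := by
            field_simp
          have hC2 : C / lam = -S := by rw [hSC]; ring
          have hC3 : t * (C / lam) = t * (-S) := by rw [hC2]
          have h8 : 0 ≤ t * ((l1 z - l1 x - S) + t * (1 / (2 * lam) * Q)) := by
            nlinarith [hstep, hl1t, hsplit, hC3]
          exact le_of_mul_le_mul_left (by linarith [h8]) ht0
        have ha : 0 ≤ l1 z - l1 x - S :=
          small_t _ _ (mul_nonneg (le_of_lt (div_pos one_pos h2lam)) hQ0) key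
        linarith [ha]
      constructor
      · refine ⟨v, hvsub, fun k => -(1 / lam) * (b k - A.mulVec x k), fun i => ?_⟩
        have : colDot A i (fun k => -(1 / lam) * (b k - A.mulVec x k))
            = -(1 / lam) * resid A b x i := by
          rw [colDot, resid, colDot, Finset.mul_sum]
          refine Finset.sum_congr rfl fun k _ => ?_
          simp only [Pi.sub_apply]
          ring
        rw [this, hvdef]
        simp only
        field_simp
        ring
      · refine ⟨v, hvsub, fun i => ?_⟩
        rw [hvdef]
        simp only
        field_simp
    · rintro ⟨_, ⟨v, hv, hres⟩⟩
      intro z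
      have hexp := expand' A b x z
      set C := ∑ i, (z i - x i) * colDot A i (A.mulVec x - b) with hCdef
      set S := ∑ i, v i * (z i - x i) with hSdef
      have hCS : C = -(lam * S) := by
        rw [hCdef, hSdef, Finset.mul_sum, ← Finset.sum_neg_distrib]
        refine Finset.sum_congr rfl fun i _ => ?_
        have h1 : colDot A i (A.mulVec x - b) = -(lam * v i) := by
          have := hresid i
          rw [hres i] at this
          linarith
        rw [h1]; ring
      have hQ0 : 0 ≤ sqnorm (A.mulVec z - A.mulVec x) := sqnorm_nonneg' _
      have hsub := hv z
      -- goal : l1 x + 1/(2 lam) * sqnorm (Ax - b) ≤ l1 z + 1/(2 lam) * sqnorm (Az - b)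
      rw [hexp, hCS]
      have hc : 1 / (2 * lam) * (2 * -(lam * S)) = -S := by field_simp
      have hcq : 0 ≤ 1 / (2 * lam) * sqnorm (A.mulVec z - A.mulVec x) :=
        mul_nonneg (le_of_lt (div_pos one_pos h2lam)) hQ0
      nlinarith [hsub, hc, hcq]
end

section
/- Let A be an m×n matrix of full row rank and ℱ the set of nonempty faces of Y⁰ = {y : ‖Aᵀy‖_∞ ≤ 1}. For each F ∈ ℱ define S_F = {(λ,b,x) ∈ ℝ₊ × ℝ^m × ℝ^n : x_i ≥ 0 and A_iᵀ(b−Ax) = λ for i ∈ 𝒜⁺(F); x_i = 0 and |A_iᵀ(b−Ax)| ≤ λ for i ∈ 𝒜⁰(F); x_i ≤ 0 and A_iᵀ(b−Ax) = −λ for i ∈ 𝒜⁻(F)}. Then the graph of the solution multifunction S of the extended ℓ₁ regularization problem equals ⋃_{F ∈ ℱ} S_F; in particular, S is a polyhedral multifunction. -/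
open Set

noncomputable section AuxProof
open Finset in
lemma sum_mul_colDot {m n : ℕ} (A : Matrix (Fin m) (Fin n) ℝ) (z : Fin n → ℝ) (y : Fin m → ℝ) :
    ∑ i, z i * colDot A i y = ∑ k, A.mulVec z k * y k := by
  simp only [colDot, Matrix.mulVec, dotProduct, Finset.mul_sum, Finset.sum_mul]
  rw [Finset.sum_comm]
  apply Finset.sum_congr rfl; intro k _; apply Finset.sum_congr rfl; intro i _; ring

lemma weak_dual {m n : ℕ} {A : Matrix (Fin m) (Fin n) ℝ} {y : Fin m → ℝ}
    (hy : y ∈ Ydual A) (z : Fin n → ℝ) :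
    ∑ i, z i * colDot A i y ≤ l1 z := by
  unfold l1
  apply Finset.sum_le_sum; intro i _
  calc z i * colDot A i y ≤ |z i * colDot A i y| := le_abs_self _
    _ = |z i| * |colDot A i y| := abs_mul _ _
    _ ≤ |z i| * 1 := mul_le_mul_of_nonneg_left (hy i) (abs_nonneg _)
    _ = |z i| := mul_one _

lemma mulVec_surj {m n : ℕ} (A : Matrix (Fin m) (Fin n) ℝ) (hrank : A.rank = m) :
    Function.Surjective A.mulVec := by
  have h : LinearMap.range A.mulVecLin = ⊤ := by
    apply Submodule.eq_top_of_finrank_eq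
    rw [← Matrix.rank, hrank, Module.finrank_pi]
    simp
  intro b
  have : b ∈ LinearMap.range A.mulVecLin := by rw [h]; trivial
  obtain ⟨x, hx⟩ := this
  exact ⟨x, hx⟩

lemma colDot_eq_zero {m n : ℕ} (A : Matrix (Fin m) (Fin n) ℝ) (hrank : A.rank = m)
    {v : Fin m → ℝ} (h : ∀ i, colDot A i v = 0) : v = 0 := by
  obtain ⟨x, hx⟩ := mulVec_surj A hrank v
  have h0 : ∑ i, x i * colDot A i v = 0 := by
    apply Finset.sum_eq_zero; intro i _; rw [h i, mul_zero]
  rw [sum_mul_colDot, hx] at h0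
  have h2 : ∀ k ∈ Finset.univ, v k * v k = 0 :=
    (Finset.sum_eq_zero_iff_of_nonneg (fun k _ => mul_self_nonneg (v k))).mp h0
  funext k
  exact mul_self_eq_zero.mp (h2 k (Finset.mem_univ k))
/-- `Aᵀ` as a linear map `y ↦ (i ↦ A_iᵀ y)`. -/
def Tmap {m n : ℕ} (A : Matrix (Fin m) (Fin n) ℝ) : (Fin m → ℝ) →ₗ[ℝ] (Fin n → ℝ) where
  toFun y := fun i => colDot A i y
  map_add' y y' := by
    funext i; simp [colDot, mul_add, Finset.sum_add_distrib]
  map_smul' c y := by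
    funext i; simp [colDot, Finset.mul_sum]; apply Finset.sum_congr rfl; intro k _; ring

lemma ydual_isCompact {m n : ℕ} (A : Matrix (Fin m) (Fin n) ℝ) (hrank : A.rank = m) :
    IsCompact (Ydual A) := by
  have hker : LinearMap.ker (Tmap A) = ⊥ := by
    rw [LinearMap.ker_eq_bot']
    intro v hv
    exact colDot_eq_zero A hrank (fun i => congrFun hv i)
  have hce := LinearMap.isClosedEmbedding_of_injective (𝕜 := ℝ) hker
  have hbox : IsCompact (Set.univ.pi fun _ : Fin n => Set.Icc (-1 : ℝ) 1) :=
    isCompact_univ_pi fun _ => isCompact_Icc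
  have hY : Ydual A = Tmap A ⁻¹' (Set.univ.pi fun _ : Fin n => Set.Icc (-1 : ℝ) 1) := by
    ext y
    simp only [Ydual, Set.mem_setOf_eq, Set.mem_preimage, Set.mem_pi, Set.mem_univ,
      Set.mem_Icc, forall_true_left, abs_le, Tmap, LinearMap.coe_mk, AddHom.coe_mk,
      true_implies]
  rw [hY]
  exact hce.isCompact_preimage hbox

lemma zero_mem_ydual {m n : ℕ} (A : Matrix (Fin m) (Fin n) ℝ) : (0 : Fin m → ℝ) ∈ Ydual A := by
  intro i; simp [colDot]

/-- The argmax face of the linear functional `⟨v, ·⟩` over `Y⁰`. -/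
def argmaxFace {m n : ℕ} (A : Matrix (Fin m) (Fin n) ℝ) (v : Fin m → ℝ) : Set (Fin m → ℝ) :=
  {y | y ∈ Ydual A ∧ ∀ z ∈ Ydual A, ∑ k, v k * z k ≤ ∑ k, v k * y k}

lemma argmaxFace_isFace {m n : ℕ} (A : Matrix (Fin m) (Fin n) ℝ) (v : Fin m → ℝ) :
    IsFaceOf (Ydual A) (argmaxFace A v) := ⟨v, rfl⟩

lemma argmaxFace_nonempty {m n : ℕ} (A : Matrix (Fin m) (Fin n) ℝ) (hrank : A.rank = m)
    (v : Fin m → ℝ) : (argmaxFace A v).Nonempty := by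
  obtain ⟨y, hy, hmax⟩ := (ydual_isCompact A hrank).exists_isMaxOn ⟨0, zero_mem_ydual A⟩
    (Continuous.continuousOn (by continuity : Continuous fun y : Fin m → ℝ => ∑ k, v k * y k))
  exact ⟨y, hy, fun z hz => hmax hz⟩
lemma face_subset {m n : ℕ} {A : Matrix (Fin m) (Fin n) ℝ} {F : Set (Fin m → ℝ)}
    (hF : IsFaceOf (Ydual A) F) : F ⊆ Ydual A := by
  obtain ⟨v, rfl⟩ := hF; exact fun y hy => hy.1

lemma colDot_mid {m n : ℕ} (A : Matrix (Fin m) (Fin n) ℝ) (i : Fin n) (y1 y2 : Fin m → ℝ) :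
    colDot A i (fun k => (y1 k + y2 k) / 2) = (colDot A i y1 + colDot A i y2) / 2 := by
  unfold colDot
  rw [← Finset.sum_add_distrib, Finset.sum_div]
  apply Finset.sum_congr rfl; intro k _; ring

lemma face_mid {m n : ℕ} {A : Matrix (Fin m) (Fin n) ℝ} {F : Set (Fin m → ℝ)}
    (hF : IsFaceOf (Ydual A) F) {y1 y2 : Fin m → ℝ} (h1 : y1 ∈ F) (h2 : y2 ∈ F) :
    (fun k => (y1 k + y2 k) / 2) ∈ F := by
  obtain ⟨v, rfl⟩ := hF
  obtain ⟨h1Y, h1M⟩ := h1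
  obtain ⟨h2Y, h2M⟩ := h2
  constructor
  · intro i
    have := abs_add_le (colDot A i y1) (colDot A i y2)
    have a1 := h1Y i; have a2 := h2Y i
    rw [colDot_mid, abs_div, abs_two]
    rw [div_le_one (by norm_num : (0:ℝ) < 2)]
    calc |colDot A i y1 + colDot A i y2| ≤ |colDot A i y1| + |colDot A i y2| := abs_add_le _ _
      _ ≤ 1 + 1 := add_le_add a1 a2
      _ = 2 := by norm_num
  · intro z hz
    have e : ∑ k, v k * (y1 k + y2 k) / 2 = (∑ k, v k * y1 k + ∑ k, v k * y2 k) / 2 := by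
      rw [← Finset.sum_add_distrib, Finset.sum_div]
      apply Finset.sum_congr rfl; intro k _; ring
    have e' : ∑ k, v k * ((y1 k + y2 k) / 2) = (∑ k, v k * y1 k + ∑ k, v k * y2 k) / 2 := by
      rw [← e]; apply Finset.sum_congr rfl; intro k _; ring
    rw [e']
    have := h1M z hz; have := h2M z hz
    linarith

lemma classes_cover {m n : ℕ} {A : Matrix (Fin m) (Fin n) ℝ} {F : Set (Fin m → ℝ)}
    (hF : IsFaceOf (Ydual A) F) (hne : F.Nonempty) (i : Fin n) :
    i ∈ Aplus A F ∨ i ∈ Azero A F ∨ i ∈ Aminus A F := by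
  by_cases hp : i ∈ Aplus A F
  · exact Or.inl hp
  by_cases hm : i ∈ Aminus A F
  · exact Or.inr (Or.inr hm)
  refine Or.inr (Or.inl ?_)
  simp only [Aplus, Set.mem_setOf_eq, not_forall] at hp
  simp only [Aminus, Set.mem_setOf_eq, not_forall] at hm
  obtain ⟨y1, hy1F, hy1⟩ := hp
  obtain ⟨y2, hy2F, hy2⟩ := hm
  have hy1Y := face_subset hF hy1F i
  have hy2Y := face_subset hF hy2F i
  rw [abs_le] at hy1Y hy2Y
  have hmid := face_mid hF hy1F hy2F
  refine ⟨_, hmid, ?_, ?_⟩ <;> rw [colDot_mid]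
  · have : -1 < colDot A i y2 := lt_of_le_of_ne hy2Y.1 (fun h => hy2 h.symm)
    linarith
  · have : colDot A i y1 < 1 := lt_of_le_of_ne hy1Y.2 hy1
    linarith

lemma plus_ne_zero {m n : ℕ} {A : Matrix (Fin m) (Fin n) ℝ} {F : Set (Fin m → ℝ)} {i : Fin n}
    (hp : i ∈ Aplus A F) (hz : i ∈ Azero A F) : False := by
  obtain ⟨y, hyF, h1, h2⟩ := hz
  have := hp y hyF; linarith

lemma minus_ne_zero {m n : ℕ} {A : Matrix (Fin m) (Fin n) ℝ} {F : Set (Fin m → ℝ)} {i : Fin n}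
    (hm : i ∈ Aminus A F) (hz : i ∈ Azero A F) : False := by
  obtain ⟨y, hyF, h1, h2⟩ := hz
  have := hm y hyF; linarith

lemma plus_ne_minus {m n : ℕ} {A : Matrix (Fin m) (Fin n) ℝ} {F : Set (Fin m → ℝ)} {i : Fin n}
    (hne : F.Nonempty) (hp : i ∈ Aplus A F) (hm : i ∈ Aminus A F) : False := by
  obtain ⟨y, hy⟩ := hne
  have := hp y hy; have := hm y hy; linarith
lemma nonneg_of_mul_pos {t e : ℝ} (ht : 0 < t) (h : 0 ≤ t * e) : 0 ≤ e := by
  by_contra he; push_neg at he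
  nlinarith [mul_pos ht (neg_pos.mpr he)]

lemma small_t_nonneg {c d S : ℝ} (hc : 0 < c) (hS : 0 ≤ S)
    (h : ∀ t : ℝ, 0 < t → t < c → 0 ≤ d + t * S / 2) : 0 ≤ d := by
  by_contra hd
  push_neg at hd
  set t := min (c/2) (-d/(S+1)) with ht
  have htpos : 0 < t := lt_min (by linarith) (div_pos (by linarith) (by linarith))
  have htc : t < c := lt_of_le_of_lt (min_le_left _ _) (by linarith)
  have h2 : t ≤ -d/(S+1) := min_le_right _ _
  have h3 : t * (S+1) ≤ -d := by
    rw [← div_mul_cancel₀ (-d) (show S+1 ≠ 0 by linarith)]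
    exact mul_le_mul_of_nonneg_right h2 (by linarith)
  have h4 := h t htpos htc
  nlinarith

lemma pert {m n : ℕ} {A : Matrix (Fin m) (Fin n) ℝ} {lam : ℝ} (hlam : 0 < lam)
    {b : Fin m → ℝ} {x : Fin n → ℝ} (hx : x ∈ Sol A lam b) (i : Fin n) (t : ℝ) :
    0 ≤ lam * |x i + t| - lam * |x i| - t * resid A b x i
        + t ^ 2 * (∑ k, (A k i) ^ 2) / 2 := by
  rw [Sol, if_neg hlam.ne'] at hx
  have h := hx (Function.update x i (x i + t))
  set S : ℝ := ∑ k, (A k i) ^ 2 with hSdef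
  set R : ℝ := resid A b x i with hRdef
  have hl1 : l1 (Function.update x i (x i + t)) = |x i + t| + (l1 x - |x i|) := by
    have e1 : (fun j => |Function.update x i (x i + t) j|)
        = Function.update (fun j => |x j|) i |x i + t| := by
      funext j; rcases eq_or_ne j i with rfl | hj
      · simp
      · simp [Function.update_of_ne hj]
    unfold l1
    rw [show (∑ j, |Function.update x i (x i + t) j|)
        = ∑ j, Function.update (fun j => |x j|) i |x i + t| j from by
      apply Finset.sum_congr rfl; intro j _; exact congrFun e1 j]
    rw [Finset.sum_update_of_mem (Finset.mem_univ i)]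
    have e4 : ∑ j, |x j| = |x i| + ∑ j ∈ Finset.univ \ {i}, |x j| := by
      rw [← Finset.erase_eq]
      exact (Finset.add_sum_erase _ _ (Finset.mem_univ i)).symm
    rw [e4]; ring
  have hmv : ∀ k, A.mulVec (Function.update x i (x i + t)) k = A.mulVec x k + t * A k i := by
    intro k
    have e1 : (fun j => A k j * Function.update x i (x i + t) j)
        = Function.update (fun j => A k j * x j) i (A k i * (x i + t)) := by
      funext j; rcases eq_or_ne j i with rfl | hj
      · simp
      · simp [Function.update_of_ne hj]
    have e2 : ∑ j, A k j * x j = A k i * x i + ∑ j ∈ Finset.univ \ {i}, A k j * x j := by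
      rw [← Finset.erase_eq]
      exact (Finset.add_sum_erase _ _ (Finset.mem_univ i)).symm
    simp only [Matrix.mulVec, dotProduct]
    rw [show (∑ j, A k j * Function.update x i (x i + t) j)
        = ∑ j, Function.update (fun j => A k j * x j) i (A k i * (x i + t)) j from by
      apply Finset.sum_congr rfl; intro j _; exact congrFun e1 j]
    rw [Finset.sum_update_of_mem (Finset.mem_univ i), e2]
    ring
  have hres : ∑ k, (A.mulVec x k - b k) * A k i = - R := by
    rw [hRdef]; unfold resid colDot
    simp only [Pi.sub_apply]
    rw [← Finset.sum_neg_distrib]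
    apply Finset.sum_congr rfl; intro k _; ring
  have hsq : sqnorm (A.mulVec (Function.update x i (x i + t)) - b)
      = sqnorm (A.mulVec x - b) + (2 * t * (- R) + t ^ 2 * S) := by
    unfold sqnorm
    rw [← hres, hSdef, Finset.mul_sum, Finset.mul_sum, ← Finset.sum_add_distrib,
      ← Finset.sum_add_distrib]
    apply Finset.sum_congr rfl; intro k _
    simp only [Pi.sub_apply]
    rw [hmv k]; ring
  rw [hl1, hsq] at h
  have hexp : 1 / (2*lam) * (sqnorm (A.mulVec x - b) + (2 * t * (- R) + t ^ 2 * S))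
      = 1 / (2*lam) * sqnorm (A.mulVec x - b) + 1/(2*lam) * (-2*t*R + t^2*S) := by ring
  rw [hexp] at h
  have key : 0 ≤ (|x i + t| - |x i|) + 1/(2*lam) * (-2*t*R + t^2*S) := by linarith
  have hpos : (0:ℝ) < 2 * lam := by linarith
  have e3 : (2*lam) * ((|x i + t| - |x i|) + 1/(2*lam) * (-2*t*R + t^2*S))
      = 2 * (lam * |x i + t| - lam * |x i| - t * R + t^2 * S / 2) := by
    field_simp; ring
  have h4 : 0 ≤ 2 * (lam * |x i + t| - lam * |x i| - t * R + t^2 * S / 2) := by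
    rw [← e3]; exact mul_nonneg hpos.le key
  linarith

lemma kkt_pos {m n : ℕ} {A : Matrix (Fin m) (Fin n) ℝ} {lam : ℝ} (hlam : 0 < lam)
    {b : Fin m → ℝ} {x : Fin n → ℝ} (hx : x ∈ Sol A lam b) {i : Fin n} (hi : 0 < x i) :
    resid A b x i = lam := by
  set S : ℝ := ∑ k, (A k i) ^ 2 with hSdef
  have hS : 0 ≤ S := Finset.sum_nonneg fun k _ => sq_nonneg _
  set R : ℝ := resid A b x i with hRdef
  have h1 : 0 ≤ (lam - R) := by
    apply small_t_nonneg hi hS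
    intro t htpos htlt
    have hp := pert hlam hx i t
    rw [abs_of_pos (by linarith : 0 < x i + t), abs_of_pos hi] at hp
    refine nonneg_of_mul_pos htpos ?_
    rw [← hRdef, ← hSdef] at hp
    nlinarith [hp]
  have h2 : 0 ≤ (R - lam) := by
    apply small_t_nonneg hi hS
    intro t htpos htlt
    have hp := pert hlam hx i (-t)
    rw [abs_of_pos (by linarith : 0 < x i + -t), abs_of_pos hi] at hp
    refine nonneg_of_mul_pos htpos ?_
    rw [← hRdef, ← hSdef] at hp
    nlinarith [hp]
  linarith

lemma kkt_neg {m n : ℕ} {A : Matrix (Fin m) (Fin n) ℝ} {lam : ℝ} (hlam : 0 < lam)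
    {b : Fin m → ℝ} {x : Fin n → ℝ} (hx : x ∈ Sol A lam b) {i : Fin n} (hi : x i < 0) :
    resid A b x i = -lam := by
  set S : ℝ := ∑ k, (A k i) ^ 2 with hSdef
  have hS : 0 ≤ S := Finset.sum_nonneg fun k _ => sq_nonneg _
  set R : ℝ := resid A b x i with hRdef
  have hmi : 0 < - x i := by linarith
  have h1 : 0 ≤ (-lam - R) := by
    apply small_t_nonneg hmi hS
    intro t htpos htlt
    have hp := pert hlam hx i t
    rw [abs_of_neg (by linarith : x i + t < 0), abs_of_neg hi] at hp
    refine nonneg_of_mul_pos htpos ?_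
    rw [← hRdef, ← hSdef] at hp
    nlinarith [hp]
  have h2 : 0 ≤ (R - (-lam)) := by
    apply small_t_nonneg hmi hS
    intro t htpos htlt
    have hp := pert hlam hx i (-t)
    rw [abs_of_neg (by linarith : x i + -t < 0), abs_of_neg hi] at hp
    refine nonneg_of_mul_pos htpos ?_
    rw [← hRdef, ← hSdef] at hp
    nlinarith [hp]
  linarith

lemma kkt_zero {m n : ℕ} {A : Matrix (Fin m) (Fin n) ℝ} {lam : ℝ} (hlam : 0 < lam)
    {b : Fin m → ℝ} {x : Fin n → ℝ} (hx : x ∈ Sol A lam b) {i : Fin n} (hi : x i = 0) :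
    |resid A b x i| ≤ lam := by
  set S : ℝ := ∑ k, (A k i) ^ 2 with hSdef
  have hS : 0 ≤ S := Finset.sum_nonneg fun k _ => sq_nonneg _
  set R : ℝ := resid A b x i with hRdef
  have h1 : 0 ≤ (lam - R) := by
    apply small_t_nonneg one_pos hS
    intro t htpos htlt
    have hp := pert hlam hx i t
    rw [hi] at hp
    rw [zero_add, abs_of_pos htpos, abs_zero] at hp
    refine nonneg_of_mul_pos htpos ?_
    rw [← hRdef, ← hSdef] at hp
    nlinarith [hp]
  have h2 : 0 ≤ (lam + R) := by
    apply small_t_nonneg one_pos hS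
    intro t htpos htlt
    have hp := pert hlam hx i (-t)
    rw [hi] at hp
    rw [zero_add, abs_neg, abs_of_pos htpos, abs_zero] at hp
    refine nonneg_of_mul_pos htpos ?_
    rw [← hRdef, ← hSdef] at hp
    nlinarith [hp]
  rw [abs_le]; constructor <;> linarith
lemma sum_eq_l1_term {m n : ℕ} {A : Matrix (Fin m) (Fin n) ℝ} {x : Fin n → ℝ}
    {z : Fin m → ℝ} (hzY : z ∈ Ydual A)
    (hsum : ∑ i, x i * colDot A i z = l1 x) (i : Fin n) :
    x i * colDot A i z = |x i| := by
  have hle : ∀ j ∈ Finset.univ, x j * colDot A j z ≤ |x j| := by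
    intro j _
    calc x j * colDot A j z ≤ |x j * colDot A j z| := le_abs_self _
      _ = |x j| * |colDot A j z| := abs_mul _ _
      _ ≤ |x j| * 1 := mul_le_mul_of_nonneg_left (hzY j) (abs_nonneg _)
      _ = |x j| := mul_one _
  have := (Finset.sum_eq_sum_iff_of_le hle).mp (by rw [hsum]; rfl)
  exact this i (Finset.mem_univ i)

lemma forward_pos {m n : ℕ} {A : Matrix (Fin m) (Fin n) ℝ} {lam : ℝ} (hlam : 0 < lam)
    {b : Fin m → ℝ} {x : Fin n → ℝ} (hx : x ∈ Sol A lam b) :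
    ∃ F, (IsFaceOf (Ydual A) F ∧ F.Nonempty) ∧ (lam, b, x) ∈ SFace A F := by
  set y : Fin m → ℝ := fun k => (b k - A.mulVec x k) / lam with hy
  have hcy : ∀ i, colDot A i y = resid A b x i / lam := by
    intro i
    unfold resid colDot
    simp only [hy, Pi.sub_apply, Finset.sum_div]
    apply Finset.sum_congr rfl; intro k _; ring
  have habs : ∀ i, |resid A b x i| ≤ lam := by
    intro i
    rcases lt_trichotomy (x i) 0 with h | h | h
    · rw [kkt_neg hlam hx h, abs_neg, abs_of_pos hlam]
    · exact kkt_zero hlam hx h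
    · rw [kkt_pos hlam hx h, abs_of_pos hlam]
  have hyY : y ∈ Ydual A := by
    intro i
    rw [hcy i, abs_div, abs_of_pos hlam, div_le_one hlam]
    exact habs i
  have hterm : ∀ i, x i * colDot A i y = |x i| := by
    intro i; rw [hcy i]
    rcases lt_trichotomy (x i) 0 with h | h | h
    · rw [kkt_neg hlam hx h, abs_of_neg h]; field_simp
    · rw [h]; simp
    · rw [kkt_pos hlam hx h, abs_of_pos h]; field_simp
  have hsum : ∑ i, x i * colDot A i y = l1 x :=
    Finset.sum_congr rfl (fun i _ => hterm i)
  refine ⟨argmaxFace A (A.mulVec x), ⟨argmaxFace_isFace A _, ?_⟩, ?_⟩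
  · refine ⟨y, hyY, fun z hz => ?_⟩
    rw [← sum_mul_colDot, ← sum_mul_colDot, hsum]
    exact weak_dual hz x
  · -- SFace membership
    have hFsub : argmaxFace A (A.mulVec x) ⊆ Ydual A := fun z hz => hz.1
    have hyF : y ∈ argmaxFace A (A.mulVec x) := by
      refine ⟨hyY, fun z hz => ?_⟩
      rw [← sum_mul_colDot, ← sum_mul_colDot, hsum]
      exact weak_dual hz x
    have hzeq : ∀ z ∈ argmaxFace A (A.mulVec x), ∀ i, x i * colDot A i z = |x i| := by
      intro z hz
      apply sum_eq_l1_term (hFsub hz)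
      have h1 : ∑ i, x i * colDot A i z ≤ l1 x := weak_dual (hFsub hz) x
      have h2 : ∑ k, A.mulVec x k * y k ≤ ∑ k, A.mulVec x k * z k := hz.2 y hyY
      rw [← sum_mul_colDot, ← sum_mul_colDot] at h2
      rw [hsum] at h2
      linarith
    refine ⟨hlam.le, ?_, ?_, ?_⟩
    · intro i hi
      have h1 : colDot A i y = 1 := hi y hyF
      rw [hcy i] at h1
      have hres : resid A b x i = lam := by field_simp at h1; linarith
      refine ⟨?_, hres⟩
      by_contra hneg; push_neg at hneg
      have := kkt_neg hlam hx hneg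
      rw [this] at hres; linarith
    · intro i hi
      obtain ⟨z, hzF, hz1, hz2⟩ := hi
      have hx0 : x i = 0 := by
        by_contra hxi
        have := hzeq z hzF i
        rcases lt_trichotomy (x i) 0 with h | h | h
        · rw [abs_of_neg h] at this; nlinarith
        · exact hxi h
        · rw [abs_of_pos h] at this; nlinarith
      exact ⟨hx0, kkt_zero hlam hx hx0⟩
    · intro i hi
      have h1 : colDot A i y = -1 := hi y hyF
      rw [hcy i] at h1
      have hres : resid A b x i = -lam := by field_simp at h1; linarith
      refine ⟨?_, hres⟩
      by_contra hneg; push_neg at hneg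
      have := kkt_pos hlam hx hneg
      rw [this] at hres; linarith
lemma l1_zero {n : ℕ} : l1 (0 : Fin n → ℝ) = 0 := by simp [l1]

lemma l1_continuous {n : ℕ} : Continuous (l1 : (Fin n → ℝ) → ℝ) := by
  unfold l1
  exact continuous_finset_sum _ fun i _ => (continuous_apply i).abs

lemma strong_duality {m n : ℕ} {A : Matrix (Fin m) (Fin n) ℝ} (hrank : A.rank = m)
    {b : Fin m → ℝ} {x : Fin n → ℝ} (hAx : A.mulVec x = b)
    (hmin : ∀ z, A.mulVec z = b → l1 x ≤ l1 z)
    {y0 : Fin m → ℝ} (hy0 : y0 ∈ argmaxFace A b) :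
    ∑ k, b k * y0 k = l1 x := by
  set μ : ℝ := ∑ k, b k * y0 k with hμ
  have hμub : ∀ z ∈ Ydual A, ∑ k, b k * z k ≤ μ := hy0.2
  have hμ0 : 0 ≤ μ := by
    have := hμub 0 (zero_mem_ydual A)
    simpa using this
  have hwd : μ ≤ l1 x := by
    rw [hμ, ← hAx, ← sum_mul_colDot]
    exact weak_dual hy0.1 x
  rcases eq_or_lt_of_le hwd with h | hlt
  · exact h
  exfalso
  -- n = 0 impossible
  rcases Nat.eq_zero_or_pos n with hn | hn
  · have : l1 x = 0 := by subst hn; simp [l1]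
    rw [this] at hlt; linarith
  have : Nonempty (Fin n) := ⟨⟨0, hn⟩⟩
  -- the compact convex set C = A '' {l1 ≤ μ}
  set K : Set (Fin n → ℝ) := {z | l1 z ≤ μ} with hK
  have hKclosed : IsClosed K := IsClosed.preimage l1_continuous isClosed_Iic
  have hKsub : K ⊆ Set.univ.pi fun _ : Fin n => Set.Icc (-μ) μ := by
    intro z hz
    intro i _
    have h1 : |z i| ≤ l1 z := by
      unfold l1
      exact Finset.single_le_sum (fun j _ => abs_nonneg (z j)) (Finset.mem_univ i)
    have h2 : |z i| ≤ μ := le_trans h1 hz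
    rw [abs_le] at h2
    exact ⟨h2.1, h2.2⟩
  have hKcompact : IsCompact K :=
    (isCompact_univ_pi fun _ => isCompact_Icc).of_isClosed_subset hKclosed hKsub
  have hKconvex : Convex ℝ K := by
    intro z hz w hw a c ha hc hac
    show l1 (a • z + c • w) ≤ μ
    have : l1 (a • z + c • w) ≤ a * l1 z + c * l1 w := by
      unfold l1
      rw [Finset.mul_sum, Finset.mul_sum, ← Finset.sum_add_distrib]
      apply Finset.sum_le_sum; intro i _
      have : |a * z i + c * w i| ≤ |a * z i| + |c * w i| := abs_add_le _ _
      rw [abs_mul, abs_mul, abs_of_nonneg ha, abs_of_nonneg hc] at this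
      simpa using this
    calc l1 (a • z + c • w) ≤ a * l1 z + c * l1 w := this
      _ ≤ a * μ + c * μ := by
          apply add_le_add
          · exact mul_le_mul_of_nonneg_left hz ha
          · exact mul_le_mul_of_nonneg_left hw hc
      _ = μ := by rw [← add_mul, hac, one_mul]
  have hmvcont : Continuous fun z : Fin n → ℝ => A.mulVec z := by
    have := LinearMap.continuous_of_finiteDimensional (A.mulVecLin)
    exact this
  set C : Set (Fin m → ℝ) := A.mulVec '' K with hC
  have hCcompact : IsCompact C := hKcompact.image hmvcont
  have hCconvex : Convex ℝ C := by
    rw [hC, show A.mulVec '' K = A.mulVecLin '' K from by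
      apply Set.image_congr; intro z _; simp [Matrix.mulVecLin]]
    exact hKconvex.linear_image A.mulVecLin
  have hbC : b ∉ C := by
    rintro ⟨z, hzK, hzb⟩
    have := hmin z hzb
    have : l1 x ≤ μ := le_trans this hzK
    linarith
  obtain ⟨f, u, hfa, hfb⟩ := geometric_hahn_banach_closed_point hCconvex hCcompact.isClosed hbC
  set w : Fin m → ℝ := fun k => f (fun j => if k = j then (1:ℝ) else 0) with hw
  have hfrep : ∀ v : Fin m → ℝ, f v = ∑ k, v k * w k := by
    intro v
    conv_lhs => rw [pi_eq_sum_univ v]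
    rw [map_sum]
    apply Finset.sum_congr rfl; intro k _
    rw [map_smul, smul_eq_mul]
  have hu0 : 0 < u := by
    have h0K : (0 : Fin n → ℝ) ∈ K := by simp [hK, l1_zero, hμ0]
    have := hfa (A.mulVec 0) ⟨0, h0K, rfl⟩
    rw [Matrix.mulVec_zero, map_zero] at this
    exact this
  -- bound : for z in K, f (A z) = ∑ i, z i * colDot A i w < u
  have hKbound : ∀ z ∈ K, ∑ i, z i * colDot A i w < u := by
    intro z hz
    have := hfa (A.mulVec z) ⟨z, hz, rfl⟩
    rw [hfrep] at this
    rw [sum_mul_colDot]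
    exact this
  obtain ⟨i0, -, hi0max⟩ := Finset.exists_max_image Finset.univ (fun i => |colDot A i w|)
    ⟨⟨0, hn⟩, Finset.mem_univ _⟩
  set M : ℝ := |colDot A i0 w| with hM
  have hMabs : ∀ i, |colDot A i w| ≤ M := fun i => hi0max i (Finset.mem_univ i)
  have hM0 : 0 ≤ M := abs_nonneg _
  rcases eq_or_lt_of_le hM0 with hMz | hMpos
  · -- M = 0 : w = 0, contradiction with f b > u > 0
    have hw0 : ∀ i, colDot A i w = 0 := by
      intro i
      have := hMabs i
      rw [← hMz] at this
      exact abs_eq_zero.mp (le_antisymm this (abs_nonneg _))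
    have : w = 0 := colDot_eq_zero A hrank hw0
    rw [hfrep b, this] at hfb
    simp at hfb
    linarith
  -- the test vector z0 supported on i0
  have hμM : μ * M < u := by
    set z0 : Fin n → ℝ := fun j => if j = i0 then (if 0 ≤ colDot A i0 w then μ else -μ) else 0
      with hz0
    have hz0K : z0 ∈ K := by
      show l1 z0 ≤ μ
      unfold l1
      rw [Finset.sum_eq_single_of_mem i0 (Finset.mem_univ i0)
        (fun j _ hj => by simp [hz0, hj])]
      simp only [hz0, if_pos rfl]
      split <;> simp [abs_of_nonneg hμ0, hμ0]
    have hval : ∑ i, z0 i * colDot A i w = μ * |colDot A i0 w| := by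
      rw [Finset.sum_eq_single_of_mem i0 (Finset.mem_univ i0)
        (fun j _ hj => by simp [hz0, hj])]
      simp only [hz0, if_pos rfl]
      rcases le_or_gt 0 (colDot A i0 w) with h | h
      · rw [if_pos h, abs_of_nonneg h]
      · rw [if_neg (not_le.mpr h), abs_of_neg h]; ring
    have := hKbound z0 hz0K
    rw [hval] at this
    rw [hM]
    exact this
  -- scaled dual point
  set yhat : Fin m → ℝ := fun k => w k / M with hyhat
  have hyhatY : yhat ∈ Ydual A := by
    intro i
    have : colDot A i yhat = colDot A i w / M := by
      unfold colDot
      simp only [hyhat, Finset.sum_div]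
      apply Finset.sum_congr rfl; intro k _; ring
    rw [this, abs_div, abs_of_pos hMpos, div_le_one hMpos]
    exact hMabs i
  have hfbval : f b = ∑ k, b k * w k := hfrep b
  have hsum : ∑ k, b k * yhat k = (∑ k, b k * w k) / M := by
    simp only [hyhat, Finset.sum_div]
    apply Finset.sum_congr rfl; intro k _; ring
  have hgt : μ < ∑ k, b k * yhat k := by
    rw [hsum]
    rw [lt_div_iff₀ hMpos]
    have : u < ∑ k, b k * w k := by rw [← hfbval]; exact hfb
    linarith
  have := hμub yhat hyhatY
  linarith

lemma forward_zero {m n : ℕ} {A : Matrix (Fin m) (Fin n) ℝ} (hrank : A.rank = m)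
    {b : Fin m → ℝ} {x : Fin n → ℝ} (hx : x ∈ Sol A 0 b) :
    ∃ F, (IsFaceOf (Ydual A) F ∧ F.Nonempty) ∧ ((0:ℝ), b, x) ∈ SFace A F := by
  rw [Sol, if_pos rfl] at hx
  obtain ⟨hAx, hmin⟩ := hx
  have hres0 : ∀ i, resid A b x i = 0 := by
    intro i; unfold resid
    rw [← hAx]
    simp [colDot]
  obtain ⟨y0, hy0⟩ := argmaxFace_nonempty A hrank b
  have hdual := strong_duality hrank hAx hmin hy0
  have hzeq : ∀ z ∈ argmaxFace A b, ∀ i, x i * colDot A i z = |x i| := by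
    intro z hz
    apply sum_eq_l1_term hz.1
    have h1 : ∑ i, x i * colDot A i z ≤ l1 x := weak_dual hz.1 x
    have h2 : ∑ k, b k * y0 k ≤ ∑ k, b k * z k := hz.2 y0 hy0.1
    have h3 : ∑ k, b k * z k = ∑ i, x i * colDot A i z := by
      rw [← hAx, sum_mul_colDot]
    rw [hdual, h3] at h2
    linarith
  refine ⟨argmaxFace A b, ⟨argmaxFace_isFace A b, ⟨y0, hy0⟩⟩, ?_⟩
  refine ⟨le_refl 0, ?_, ?_, ?_⟩
  · intro i hi
    refine ⟨?_, by rw [hres0 i]⟩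
    by_contra hneg; push_neg at hneg
    have h1 := hzeq y0 hy0 i
    rw [hi y0 hy0, mul_one, abs_of_neg hneg] at h1
    linarith
  · intro i hi
    obtain ⟨z, hzF, hz1, hz2⟩ := hi
    have hx0 : x i = 0 := by
      by_contra hxi
      have := hzeq z hzF i
      rcases lt_trichotomy (x i) 0 with h | h | h
      · rw [abs_of_neg h] at this; nlinarith
      · exact hxi h
      · rw [abs_of_pos h] at this; nlinarith
    refine ⟨hx0, by rw [hres0 i]; simp⟩
  · intro i hi
    refine ⟨?_, by rw [hres0 i]; ring⟩
    by_contra hneg; push_neg at hneg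
    have h1 := hzeq y0 hy0 i
    rw [hi y0 hy0, mul_neg_one, abs_of_pos hneg] at h1
    linarith
lemma backward {m n : ℕ} {A : Matrix (Fin m) (Fin n) ℝ} (hrank : A.rank = m)
    {F : Set (Fin m → ℝ)} (hF : IsFaceOf (Ydual A) F) (hne : F.Nonempty)
    {lam : ℝ} {b : Fin m → ℝ} {x : Fin n → ℝ}
    (hp : (lam, b, x) ∈ SFace A F) : x ∈ Sol A lam b := by
  obtain ⟨hlam0, hplus, hzero, hminus⟩ := hp
  simp only at hlam0 hplus hzero hminus
  rcases eq_or_lt_of_le hlam0 with hlam | hlam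
  · -- lam = 0
    have hres0 : ∀ i, resid A b x i = 0 := by
      intro i
      rcases classes_cover hF hne i with hi | hi | hi
      · rw [(hplus i hi).2, ← hlam]
      · have := (hzero i hi).2
        rw [← hlam] at this
        exact abs_eq_zero.mp (le_antisymm this (abs_nonneg _))
      · rw [(hminus i hi).2, ← hlam, neg_zero]
    have hAx : A.mulVec x = b := by
      have hsub : (fun k => b k - A.mulVec x k) = 0 := by
        apply colDot_eq_zero A hrank
        intro i
        have := hres0 i
        unfold resid at this
        rw [← this]
        unfold colDot
        apply Finset.sum_congr rfl; intro k _
        simp [Pi.sub_apply]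
      funext k
      have := congrFun hsub k
      simp only [Pi.zero_apply] at this
      linarith
    rw [Sol, if_pos hlam.symm]
    refine ⟨hAx, ?_⟩
    intro z hz
    obtain ⟨y0, hy0⟩ := id hne
    have hy0Y : y0 ∈ Ydual A := face_subset hF hy0
    have hterm : ∀ i, x i * colDot A i y0 = |x i| := by
      intro i
      rcases classes_cover hF hne i with hi | hi | hi
      · rw [hi y0 hy0, mul_one, abs_of_nonneg (hplus i hi).1]
      · rw [(hzero i hi).1]; simp
      · rw [hi y0 hy0, mul_neg_one, abs_of_nonpos (hminus i hi).1]
    have h1 : l1 x = ∑ i, x i * colDot A i y0 :=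
      (Finset.sum_congr rfl (fun i _ => hterm i)).symm
    have h2 : ∑ i, x i * colDot A i y0 = ∑ i, z i * colDot A i y0 := by
      rw [sum_mul_colDot, sum_mul_colDot, hAx, hz]
    rw [h1, h2]
    exact weak_dual hy0Y z
  · -- lam > 0
    rw [Sol, if_neg hlam.ne']
    intro z
    have habs : ∀ i, |resid A b x i| ≤ lam := by
      intro i
      rcases classes_cover hF hne i with hi | hi | hi
      · rw [(hplus i hi).2, abs_of_pos hlam]
      · exact (hzero i hi).2
      · rw [(hminus i hi).2, abs_neg, abs_of_pos hlam]
    have hsx : ∀ i, resid A b x i * x i = lam * |x i| := by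
      intro i
      rcases classes_cover hF hne i with hi | hi | hi
      · rw [(hplus i hi).2, abs_of_nonneg (hplus i hi).1]
      · rw [(hzero i hi).1]; simp
      · rw [(hminus i hi).2, abs_of_nonpos (hminus i hi).1]; ring
    have hl1x : ∑ i, resid A b x i * x i = lam * l1 x := by
      rw [show lam * l1 x = ∑ i, lam * |x i| from by rw [l1, Finset.mul_sum]]
      exact Finset.sum_congr rfl (fun i _ => hsx i)
    have hl1z : ∑ i, resid A b x i * z i ≤ lam * l1 z := by
      rw [show lam * l1 z = ∑ i, lam * |z i| from by rw [l1, Finset.mul_sum]]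
      apply Finset.sum_le_sum; intro i _
      calc resid A b x i * z i ≤ |resid A b x i * z i| := le_abs_self _
        _ = |resid A b x i| * |z i| := abs_mul _ _
        _ ≤ lam * |z i| := mul_le_mul_of_nonneg_right (habs i) (abs_nonneg _)
    have hcross : ∑ k, (A.mulVec x k - b k) * (A.mulVec z k - A.mulVec x k)
        = - ∑ i, resid A b x i * (z i - x i) := by
      have e1 : ∑ i, (z i - x i) * colDot A i (fun k => A.mulVec x k - b k)
          = ∑ k, A.mulVec (fun i => z i - x i) k * (A.mulVec x k - b k) :=
        sum_mul_colDot A (fun i => z i - x i) (fun k => A.mulVec x k - b k)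
      have e2 : ∀ i, colDot A i (fun k => A.mulVec x k - b k) = - resid A b x i := by
        intro i
        unfold resid colDot
        rw [← Finset.sum_neg_distrib]
        apply Finset.sum_congr rfl; intro k _
        simp [Pi.sub_apply]; ring
      have e3 : ∀ k, A.mulVec (fun i => z i - x i) k = A.mulVec z k - A.mulVec x k := by
        intro k
        simp only [Matrix.mulVec, dotProduct]
        rw [← Finset.sum_sub_distrib]
        apply Finset.sum_congr rfl; intro j _; ring
      calc ∑ k, (A.mulVec x k - b k) * (A.mulVec z k - A.mulVec x k)
          = ∑ k, A.mulVec (fun i => z i - x i) k * (A.mulVec x k - b k) := by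
            apply Finset.sum_congr rfl; intro k _; rw [e3 k]; ring
        _ = ∑ i, (z i - x i) * colDot A i (fun k => A.mulVec x k - b k) := e1.symm
        _ = ∑ i, (z i - x i) * (- resid A b x i) := by
            apply Finset.sum_congr rfl; intro i _; rw [e2 i]
        _ = - ∑ i, resid A b x i * (z i - x i) := by
            rw [← Finset.sum_neg_distrib]
            apply Finset.sum_congr rfl; intro i _; ring
    have hquad : sqnorm (A.mulVec x - b)
        + 2 * ∑ k, (A.mulVec x k - b k) * (A.mulVec z k - A.mulVec x k)
        ≤ sqnorm (A.mulVec z - b) := by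
      unfold sqnorm
      rw [Finset.mul_sum, ← Finset.sum_add_distrib]
      apply Finset.sum_le_sum; intro k _
      simp only [Pi.sub_apply]
      nlinarith [sq_nonneg (A.mulVec z k - A.mulVec x k)]
    have hsplit : ∑ i, resid A b x i * (z i - x i)
        = ∑ i, resid A b x i * z i - ∑ i, resid A b x i * x i := by
      rw [← Finset.sum_sub_distrib]
      apply Finset.sum_congr rfl; intro i _; ring
    have hdiff : 2 * lam * (l1 x - l1 z) ≤ sqnorm (A.mulVec z - b) - sqnorm (A.mulVec x - b) := by
      rw [hcross, hsplit] at hquad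
      nlinarith [hquad, hl1x, hl1z]
    have hfr : l1 x - l1 z ≤ 1 / (2 * lam) * (sqnorm (A.mulVec z - b) - sqnorm (A.mulVec x - b)) := by
      have h2lam : (0:ℝ) < 2 * lam := by linarith
      have := mul_le_mul_of_nonneg_left hdiff (le_of_lt (by positivity : (0:ℝ) < 1 / (2 * lam)))
      rw [show 1 / (2 * lam) * (2 * lam * (l1 x - l1 z)) = l1 x - l1 z from by
        field_simp] at this
      exact this
    have hexp : 1 / (2 * lam) * (sqnorm (A.mulVec z - b) - sqnorm (A.mulVec x - b))
        = 1 / (2 * lam) * sqnorm (A.mulVec z - b) - 1 / (2 * lam) * sqnorm (A.mulVec x - b) := by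
      ring
    rw [hexp] at hfr
    linarith
lemma poly_halfspace {m n : ℕ} (a1 : ℝ) (a2 : Fin m → ℝ) (a3 : Fin n → ℝ) (c : ℝ) :
    IsPolyhedral3 {p : ℝ × (Fin m → ℝ) × (Fin n → ℝ) |
      a1 * p.1 + (∑ t, a2 t * p.2.1 t) + (∑ t, a3 t * p.2.2 t) ≤ c} := by
  refine ⟨1, fun _ => (a1, a2, a3), fun _ => c, ?_⟩
  ext p
  simp [Set.mem_setOf_eq]

lemma poly_empty {m n : ℕ} : IsPolyhedral3 (∅ : Set (ℝ × (Fin m → ℝ) × (Fin n → ℝ))) := by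
  refine ⟨1, fun _ => (0, 0, 0), fun _ => -1, ?_⟩
  ext p
  simp only [Set.mem_empty_iff_false, Set.mem_setOf_eq, false_iff, not_forall]
  refine ⟨0, ?_⟩
  simp

lemma poly_inter {m n : ℕ} {s s' : Set (ℝ × (Fin m → ℝ) × (Fin n → ℝ))}
    (hs : IsPolyhedral3 s) (hs' : IsPolyhedral3 s') : IsPolyhedral3 (s ∩ s') := by
  obtain ⟨k, a, β, rfl⟩ := hs
  obtain ⟨k', a', β', rfl⟩ := hs'
  refine ⟨k + k', Fin.addCases a a', Fin.addCases β β', ?_⟩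
  ext p
  simp only [Set.mem_inter_iff, Set.mem_setOf_eq]
  constructor
  · rintro ⟨h1, h2⟩ j
    induction j using Fin.addCases with
    | left i => simpa only [Fin.addCases_left] using h1 i
    | right i => simpa only [Fin.addCases_right] using h2 i
  · intro h
    constructor
    · intro i
      have := h (Fin.castAdd k' i)
      simpa only [Fin.addCases_left] using this
    · intro i
      have := h (Fin.natAdd k i)
      simpa only [Fin.addCases_right] using this

lemma poly_iInter {m n N : ℕ} (f : Fin N → Set (ℝ × (Fin m → ℝ) × (Fin n → ℝ)))
    (h : ∀ j, IsPolyhedral3 (f j)) : IsPolyhedral3 (⋂ j, f j) := by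
  induction N with
  | zero =>
    refine ⟨0, Fin.elim0, Fin.elim0, ?_⟩
    ext p
    simp [Set.mem_iInter]
  | succ N ih =>
    have : (⋂ j, f j) = f 0 ∩ ⋂ j, f (Fin.succ j) := by
      ext p
      simp only [Set.mem_iInter, Set.mem_inter_iff]
      exact ⟨fun hp => ⟨hp 0, fun j => hp _⟩, fun hp j => Fin.cases hp.1 hp.2 j⟩
    rw [this]
    exact poly_inter (h 0) (ih _ (fun j => h _))

lemma sum_ite_mul {n : ℕ} (i : Fin n) (r : ℝ) (v : Fin n → ℝ) :
    ∑ t, (if t = i then r else 0) * v t = r * v i := by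
  rw [Finset.sum_eq_single_of_mem i (Finset.mem_univ i) (fun j _ hj => by simp [hj])]
  simp

lemma sum_zero_mul {k : ℕ} (v : Fin k → ℝ) : ∑ t, (0:ℝ) * v t = 0 := by simp

lemma resid_affine {m n : ℕ} (A : Matrix (Fin m) (Fin n) ℝ) (b : Fin m → ℝ)
    (x : Fin n → ℝ) (i : Fin n) :
    resid A b x i = (∑ k, A k i * b k) - ∑ t, (∑ k, A k i * A k t) * x t := by
  unfold resid colDot
  simp only [Pi.sub_apply, mul_sub]
  rw [Finset.sum_sub_distrib]
  congr 1
  rw [show ∑ k, A k i * A.mulVec x k = ∑ k, ∑ t, A k i * A k t * x t from by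
    apply Finset.sum_congr rfl; intro k _
    rw [Matrix.mulVec, dotProduct, Finset.mul_sum]
    apply Finset.sum_congr rfl; intro t _; ring]
  rw [Finset.sum_comm]
  apply Finset.sum_congr rfl; intro t _
  rw [Finset.sum_mul]

lemma poly_resid_le {m n : ℕ} (A : Matrix (Fin m) (Fin n) ℝ) (i : Fin n) (s : ℝ) :
    IsPolyhedral3 {p : ℝ × (Fin m → ℝ) × (Fin n → ℝ) | resid A p.2.1 p.2.2 i ≤ s * p.1} := by
  have := poly_halfspace (-s) (fun k => A k i) (fun t => -(∑ k, A k i * A k t)) (0 : ℝ)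
    (m := m) (n := n)
  convert this using 1
  ext p
  simp only [Set.mem_setOf_eq]
  rw [resid_affine]
  have e : ∑ t, (-(∑ k, A k i * A k t)) * p.2.2 t = - ∑ t, (∑ k, A k i * A k t) * p.2.2 t := by
    rw [← Finset.sum_neg_distrib]
    apply Finset.sum_congr rfl; intro t _; ring
  rw [e]
  constructor <;> intro h <;> linarith

lemma poly_le_resid {m n : ℕ} (A : Matrix (Fin m) (Fin n) ℝ) (i : Fin n) (s : ℝ) :
    IsPolyhedral3 {p : ℝ × (Fin m → ℝ) × (Fin n → ℝ) | s * p.1 ≤ resid A p.2.1 p.2.2 i} := by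
  have := poly_halfspace (s) (fun k => -(A k i)) (fun t => ∑ k, A k i * A k t) (0 : ℝ)
    (m := m) (n := n)
  convert this using 1
  ext p
  simp only [Set.mem_setOf_eq]
  rw [resid_affine]
  have e : ∑ t, (-(A t i)) * p.2.1 t = - ∑ t, A t i * p.2.1 t := by
    rw [← Finset.sum_neg_distrib]
    apply Finset.sum_congr rfl; intro t _; ring
  rw [e]
  constructor <;> intro h <;> linarith

lemma poly_x_nonneg {m n : ℕ} (i : Fin n) :
    IsPolyhedral3 {p : ℝ × (Fin m → ℝ) × (Fin n → ℝ) | 0 ≤ p.2.2 i} := by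
  have := poly_halfspace (0:ℝ) (0 : Fin m → ℝ) (fun t => if t = i then (-1:ℝ) else 0) (0 : ℝ)
  convert this using 1
  ext p
  simp only [Set.mem_setOf_eq, Pi.zero_apply, sum_zero_mul, sum_ite_mul]
  constructor <;> intro h <;> linarith

lemma poly_x_nonpos {m n : ℕ} (i : Fin n) :
    IsPolyhedral3 {p : ℝ × (Fin m → ℝ) × (Fin n → ℝ) | p.2.2 i ≤ 0} := by
  have := poly_halfspace (0:ℝ) (0 : Fin m → ℝ) (fun t => if t = i then (1:ℝ) else 0) (0 : ℝ)
  convert this using 1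
  ext p
  simp only [Set.mem_setOf_eq, Pi.zero_apply, sum_zero_mul, sum_ite_mul]
  constructor <;> intro h <;> linarith

lemma poly_lam_nonneg {m n : ℕ} :
    IsPolyhedral3 {p : ℝ × (Fin m → ℝ) × (Fin n → ℝ) | 0 ≤ p.1} := by
  have := poly_halfspace (-1:ℝ) (0 : Fin m → ℝ) (0 : Fin n → ℝ) (0 : ℝ)
  convert this using 1
  ext p
  simp only [Set.mem_setOf_eq, Pi.zero_apply, sum_zero_mul]
  constructor <;> intro h <;> linarith

/-- The three basic coordinate pieces. -/
def plusSet {m n : ℕ} (A : Matrix (Fin m) (Fin n) ℝ) (i : Fin n) :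
    Set (ℝ × (Fin m → ℝ) × (Fin n → ℝ)) :=
  {p | 0 ≤ p.2.2 i ∧ resid A p.2.1 p.2.2 i = p.1}

def zeroSet {m n : ℕ} (A : Matrix (Fin m) (Fin n) ℝ) (i : Fin n) :
    Set (ℝ × (Fin m → ℝ) × (Fin n → ℝ)) :=
  {p | p.2.2 i = 0 ∧ |resid A p.2.1 p.2.2 i| ≤ p.1}

def minusSet {m n : ℕ} (A : Matrix (Fin m) (Fin n) ℝ) (i : Fin n) :
    Set (ℝ × (Fin m → ℝ) × (Fin n → ℝ)) :=
  {p | p.2.2 i ≤ 0 ∧ resid A p.2.1 p.2.2 i = -p.1}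

lemma poly_plusSet {m n : ℕ} (A : Matrix (Fin m) (Fin n) ℝ) (i : Fin n) :
    IsPolyhedral3 (plusSet A i) := by
  have h : plusSet A i = {p : ℝ × (Fin m → ℝ) × (Fin n → ℝ) | 0 ≤ p.2.2 i}
      ∩ ({p | resid A p.2.1 p.2.2 i ≤ 1 * p.1} ∩ {p | 1 * p.1 ≤ resid A p.2.1 p.2.2 i}) := by
    ext p
    simp only [plusSet, Set.mem_setOf_eq, Set.mem_inter_iff, one_mul]
    constructor
    · rintro ⟨h1, h2⟩; exact ⟨h1, le_of_eq h2, ge_of_eq h2⟩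
    · rintro ⟨h1, h2, h3⟩; exact ⟨h1, le_antisymm h2 h3⟩
  rw [h]
  exact poly_inter (poly_x_nonneg i) (poly_inter (poly_resid_le A i 1) (poly_le_resid A i 1))

lemma poly_zeroSet {m n : ℕ} (A : Matrix (Fin m) (Fin n) ℝ) (i : Fin n) :
    IsPolyhedral3 (zeroSet A i) := by
  have h : zeroSet A i = ({p : ℝ × (Fin m → ℝ) × (Fin n → ℝ) | 0 ≤ p.2.2 i} ∩ {p | p.2.2 i ≤ 0})
      ∩ ({p | resid A p.2.1 p.2.2 i ≤ 1 * p.1} ∩ {p | (-1) * p.1 ≤ resid A p.2.1 p.2.2 i}) := by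
    ext p
    simp only [zeroSet, Set.mem_setOf_eq, Set.mem_inter_iff, one_mul, abs_le, neg_one_mul]
    constructor
    · rintro ⟨h1, h2, h3⟩; exact ⟨⟨le_of_eq h1.symm, le_of_eq h1⟩, h3, h2⟩
    · rintro ⟨⟨h1, h2⟩, h3, h4⟩; exact ⟨le_antisymm h2 h1, h4, h3⟩
  rw [h]
  exact poly_inter (poly_inter (poly_x_nonneg i) (poly_x_nonpos i))
    (poly_inter (poly_resid_le A i 1) (poly_le_resid A i (-1)))

lemma poly_minusSet {m n : ℕ} (A : Matrix (Fin m) (Fin n) ℝ) (i : Fin n) :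
    IsPolyhedral3 (minusSet A i) := by
  have h : minusSet A i = {p : ℝ × (Fin m → ℝ) × (Fin n → ℝ) | p.2.2 i ≤ 0}
      ∩ ({p | resid A p.2.1 p.2.2 i ≤ (-1) * p.1} ∩ {p | (-1) * p.1 ≤ resid A p.2.1 p.2.2 i}) := by
    ext p
    simp only [minusSet, Set.mem_setOf_eq, Set.mem_inter_iff, neg_one_mul]
    constructor
    · rintro ⟨h1, h2⟩; exact ⟨h1, le_of_eq h2, ge_of_eq h2⟩
    · rintro ⟨h1, h2, h3⟩; exact ⟨h1, le_antisymm h2 h3⟩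
  rw [h]
  exact poly_inter (poly_x_nonpos i) (poly_inter (poly_resid_le A i (-1)) (poly_le_resid A i (-1)))

open Classical in
/-- The sign pattern associated to a face. -/
noncomputable def sig {m n : ℕ} (A : Matrix (Fin m) (Fin n) ℝ) (F : Set (Fin m → ℝ)) :
    Fin n → Fin 3 :=
  fun i => if i ∈ Aplus A F then 0 else if i ∈ Azero A F then 1 else 2

/-- The polyhedral set associated to a sign pattern. -/
def Qset {m n : ℕ} (A : Matrix (Fin m) (Fin n) ℝ) (σ : Fin n → Fin 3) :
    Set (ℝ × (Fin m → ℝ) × (Fin n → ℝ)) :=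
  {p | 0 ≤ p.1} ∩ ⋂ i, (if σ i = 0 then plusSet A i else if σ i = 1 then zeroSet A i
    else minusSet A i)

lemma poly_Qset {m n : ℕ} (A : Matrix (Fin m) (Fin n) ℝ) (σ : Fin n → Fin 3) :
    IsPolyhedral3 (Qset A σ) := by
  apply poly_inter poly_lam_nonneg
  apply poly_iInter
  intro i
  split
  · exact poly_plusSet A i
  split
  · exact poly_zeroSet A i
  · exact poly_minusSet A i
lemma sig_plus {m n : ℕ} {A : Matrix (Fin m) (Fin n) ℝ} {F : Set (Fin m → ℝ)} {i : Fin n}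
    (hip : i ∈ Aplus A F) : sig A F i = 0 := by simp [sig, hip]

lemma sig_zero {m n : ℕ} {A : Matrix (Fin m) (Fin n) ℝ} {F : Set (Fin m → ℝ)} {i : Fin n}
    (hip : i ∉ Aplus A F) (hiz : i ∈ Azero A F) : sig A F i = 1 := by simp [sig, hip, hiz]

lemma sig_minus {m n : ℕ} {A : Matrix (Fin m) (Fin n) ℝ} {F : Set (Fin m → ℝ)} {i : Fin n}
    (hip : i ∉ Aplus A F) (hiz : i ∉ Azero A F) : sig A F i = 2 := by simp [sig, hip, hiz]

lemma piece_plus {m n : ℕ} {A : Matrix (Fin m) (Fin n) ℝ} {F : Set (Fin m → ℝ)} {i : Fin n}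
    (hip : i ∈ Aplus A F) :
    (if sig A F i = 0 then plusSet A i else if sig A F i = 1 then zeroSet A i
      else minusSet A i) = plusSet A i := by
  rw [sig_plus hip]
  simp

lemma piece_zero {m n : ℕ} {A : Matrix (Fin m) (Fin n) ℝ} {F : Set (Fin m → ℝ)} {i : Fin n}
    (hip : i ∉ Aplus A F) (hiz : i ∈ Azero A F) :
    (if sig A F i = 0 then plusSet A i else if sig A F i = 1 then zeroSet A i
      else minusSet A i) = zeroSet A i := by
  rw [sig_zero hip hiz]
  simp

lemma piece_minus {m n : ℕ} {A : Matrix (Fin m) (Fin n) ℝ} {F : Set (Fin m → ℝ)} {i : Fin n}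
    (hip : i ∉ Aplus A F) (hiz : i ∉ Azero A F) :
    (if sig A F i = 0 then plusSet A i else if sig A F i = 1 then zeroSet A i
      else minusSet A i) = minusSet A i := by
  rw [sig_minus hip hiz]
  simp

lemma SFace_eq_Qset {m n : ℕ} {A : Matrix (Fin m) (Fin n) ℝ} {F : Set (Fin m → ℝ)}
    (hF : IsFaceOf (Ydual A) F) (hne : F.Nonempty) :
    SFace A F = Qset A (sig A F) := by
  ext p
  simp only [SFace, Qset, Set.mem_setOf_eq, Set.mem_inter_iff, Set.mem_iInter]
  constructor
  · rintro ⟨h0, hplus, hzero, hminus⟩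
    refine ⟨h0, fun i => ?_⟩
    by_cases hip : i ∈ Aplus A F
    · rw [piece_plus hip]
      exact hplus i hip
    by_cases hiz : i ∈ Azero A F
    · rw [piece_zero hip hiz]
      exact hzero i hiz
    · have him : i ∈ Aminus A F :=
        ((classes_cover hF hne i).resolve_left hip).resolve_left hiz
      rw [piece_minus hip hiz]
      exact hminus i him
  · rintro ⟨h0, hall⟩
    refine ⟨h0, ?_, ?_, ?_⟩
    · intro i hip
      have h := hall i
      rw [piece_plus hip] at h
      exact h
    · intro i hiz
      have hip : i ∉ Aplus A F := fun hip => plus_ne_zero hip hiz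
      have h := hall i
      rw [piece_zero hip hiz] at h
      exact h
    · intro i him
      have hip : i ∉ Aplus A F := fun hip => plus_ne_minus hne hip him
      have hiz : i ∉ Azero A F := fun hiz => minus_ne_zero him hiz
      have h := hall i
      rw [piece_minus hip hiz] at h
      exact h

end AuxProof

theorem stmt8 {m n : ℕ} (A : Matrix (Fin m) (Fin n) ℝ) (hrank : A.rank = m) :
    (gphS A = ⋃ F ∈ {F : Set (Fin m → ℝ) | IsFaceOf (Ydual A) F ∧ F.Nonempty}, SFace A F) ∧
    ∃ (L : ℕ) (P : Fin L → Set (ℝ × (Fin m → ℝ) × (Fin n → ℝ))),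
      (∀ i, IsPolyhedral3 (P i)) ∧ gphS A = ⋃ i, P i := by
  classical
  have hpart1 : gphS A = ⋃ F ∈ {F : Set (Fin m → ℝ) | IsFaceOf (Ydual A) F ∧ F.Nonempty},
      SFace A F := by
    ext p
    obtain ⟨lam, b, x⟩ := p
    simp only [Set.mem_iUnion, Set.mem_setOf_eq, exists_prop]
    constructor
    · rintro ⟨h0, hsol⟩
      simp only at h0 hsol
      rcases eq_or_lt_of_le h0 with h | h
      · obtain ⟨F, hF, hmem⟩ := forward_zero hrank (show x ∈ Sol A 0 b from by
          rw [h]; exact hsol)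
        exact ⟨F, hF, by rw [← h]; exact hmem⟩
      · obtain ⟨F, hF, hmem⟩ := forward_pos h hsol
        exact ⟨F, hF, hmem⟩
    · rintro ⟨F, ⟨hF, hne⟩, hmem⟩
      exact ⟨hmem.1, backward hrank hF hne hmem⟩
  refine ⟨hpart1, 3 ^ n, fun j => if h : ∃ F, (IsFaceOf (Ydual A) F ∧ F.Nonempty) ∧
      sig A F = finFunctionFinEquiv.symm j then Qset A (finFunctionFinEquiv.symm j) else ∅,
      ?_, ?_⟩
  · intro j
    beta_reduce
    by_cases h : ∃ F, (IsFaceOf (Ydual A) F ∧ F.Nonempty) ∧ sig A F = finFunctionFinEquiv.symm j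
    · rw [dif_pos h]; exact poly_Qset A _
    · rw [dif_neg h]; exact poly_empty
  · ext p
    constructor
    · intro hp
      rw [hpart1] at hp
      simp only [Set.mem_iUnion, Set.mem_setOf_eq, exists_prop] at hp
      obtain ⟨F, ⟨hF, hne⟩, hmem⟩ := hp
      rw [Set.mem_iUnion]
      refine ⟨finFunctionFinEquiv (sig A F), ?_⟩
      beta_reduce
      have hcond : ∃ F', (IsFaceOf (Ydual A) F' ∧ F'.Nonempty) ∧
          sig A F' = finFunctionFinEquiv.symm (finFunctionFinEquiv (sig A F)) :=
        ⟨F, ⟨hF, hne⟩, by rw [Equiv.symm_apply_apply]⟩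
      rw [dif_pos hcond, Equiv.symm_apply_apply, ← SFace_eq_Qset hF hne]
      exact hmem
    · intro hp
      rw [Set.mem_iUnion] at hp
      obtain ⟨j, hj⟩ := hp
      beta_reduce at hj
      by_cases h : ∃ F, (IsFaceOf (Ydual A) F ∧ F.Nonempty) ∧
          sig A F = finFunctionFinEquiv.symm j
      · obtain ⟨F, ⟨hF, hne⟩, hsig⟩ := h
        rw [dif_pos ⟨F, ⟨hF, hne⟩, hsig⟩, ← hsig, ← SFace_eq_Qset hF hne] at hj
        rw [hpart1]
        simp only [Set.mem_iUnion, Set.mem_setOf_eq, exists_prop]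
        exact ⟨F, ⟨hF, hne⟩, hj⟩
      · rw [dif_neg h] at hj
        exact absurd hj (Set.notMem_empty p)
end
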